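/- arXiv:2212.07670 — 7 statements merged into one kernel-verified Lean document; each statement's English description precedes it below -/
import Mathlib

section
/- If a tree S is small (every ray in S is eventually bare) and T is a minor of S, then T is also small. -/
open SimpleGraph

/-- A ray in a graph: a one-way infinite path. -/
def IsRay {V : Type*} (G : SimpleGraph V) (f : ℕ → V) : Prop :=
  Function.Injective f ∧ ∀ n, G.Adj (f n) (f (n + 1))

/-- The degree of a vertex, as an extended natural number. -/
noncomputable def eDeg {V : Type*} (G : SimpleGraph V) (v : V) : ℕ∞ :=
  (G.neighborSet v).encard

/-- A ray is eventually bare if from some index on all its vertices have degree 2. -/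
def EventuallyBare {V : Type*} (G : SimpleGraph V) (f : ℕ → V) : Prop :=
  ∃ M : ℕ, ∀ n ≥ M, eDeg G (f n) = 2

/-- A tree is small if every ray in it is eventually bare. -/
def IsSmall {V : Type*} (G : SimpleGraph V) : Prop :=
  ∀ f : ℕ → V, IsRay G f → EventuallyBare G f

/-- A minor model of `T` in `S`: pairwise disjoint nonempty connected branch sets,
every edge of `T` witnessed by an edge of `S` between the corresponding branch sets. -/
structure IsModel {V W : Type*} (T : SimpleGraph V) (S : SimpleGraph W)
    (μ : V → Set W) : Prop where
  nonempty : ∀ v, (μ v).Nonempty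
  connected : ∀ v, (S.induce (μ v)).Connected
  disjoint : ∀ v w, v ≠ w → Disjoint (μ v) (μ w)
  edge : ∀ v w, T.Adj v w → ∃ a ∈ μ v, ∃ b ∈ μ w, S.Adj a b

/-- `T` is a minor of `S`. -/
def IsMinorOf {V W : Type*} (T : SimpleGraph V) (S : SimpleGraph W) : Prop :=
  ∃ μ : V → Set W, IsModel T S μ

/-- Tree order relative to a root: `v` lies on the (unique) path from `r` to `w`. -/
def treeLE {V : Type*} (G : SimpleGraph V) (r v w : V) : Prop :=
  v = w ∨ ∃ p : G.Walk r w, p.IsPath ∧ v ∈ p.support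

/-- Closure of a vertex set: the set together with all vertices on paths joining its members. -/
def treeClosure {V : Type*} (G : SimpleGraph V) (A : Set V) : Set V :=
  A ∪ {x | ∃ a ∈ A, ∃ b ∈ A, ∃ p : G.Walk a b, p.IsPath ∧ x ∈ p.support}

/-! The branch sets of the vertices of a ray `f` of `T` are joined, by paths inside
them and the edges of `S` witnessing the edges of `f`, into a ray `g` of `S`. Far out, every
vertex of `g` has exactly its two ray neighbours, so the connected branch set `μ (f n)` lies
inside `g`, and any edge of `S` leaving it goes to the branch set of `f (n - 1)` or
`f (n + 1)`. Hence `f n` has no neighbours besides these two. -/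

section Blocks

/-- The position `(block, offset)` of the `m`-th entry of the concatenation of blocks of
lengths `len 0 + 1, len 1 + 1, …`. -/
def blockPos (len : ℕ → ℕ) : ℕ → ℕ × ℕ
  | 0 => (0, 0)
  | m + 1 =>
    let p := blockPos len m
    if p.2 < len p.1 then (p.1, p.2 + 1) else (p.1 + 1, 0)

variable (len : ℕ → ℕ)

lemma blockPos_succ (m : ℕ) :
    blockPos len (m + 1) =
      if (blockPos len m).2 < len (blockPos len m).1 then
        ((blockPos len m).1, (blockPos len m).2 + 1)
      else ((blockPos len m).1 + 1, 0) :=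
  rfl

lemma blockPos_snd_le : ∀ m, (blockPos len m).2 ≤ len (blockPos len m).1
  | 0 => Nat.zero_le _
  | m + 1 => by
    rw [blockPos_succ]
    split_ifs with h
    exacts [h, Nat.zero_le _]

lemma blockPos_fst_succ (m : ℕ) :
    (blockPos len (m + 1)).1 = (blockPos len m).1 ∨
      (blockPos len (m + 1)).1 = (blockPos len m).1 + 1 := by
  rw [blockPos_succ]
  split_ifs <;> simp

lemma blockPos_fst_le : ∀ m, (blockPos len m).1 ≤ m
  | 0 => le_rfl
  | m + 1 => by
    have := blockPos_fst_le m
    rcases blockPos_fst_succ len m with h | h <;> omega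

lemma strictMono_blockPos : StrictMono (toLex ∘ blockPos len) :=
  strictMono_nat_of_lt_succ fun m => by
    simp only [Function.comp_apply, blockPos_succ, Prod.Lex.toLex_lt_toLex]
    split_ifs <;> simp

lemma blockPos_add {m n : ℕ} (h : blockPos len m = (n, 0)) :
    ∀ j ≤ len n, blockPos len (m + j) = (n, j)
  | 0, _ => h
  | j + 1, hj => by
    rw [← add_assoc, blockPos_succ, blockPos_add h j (by omega), if_pos (show j < len n by omega)]

lemma blockPos_fst_surjective : Function.Surjective fun m => (blockPos len m).1 := by
  suffices ∀ n, ∃ m, blockPos len m = (n, 0) from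
    fun n => (this n).imp fun _ h => congrArg Prod.fst h
  intro n
  induction n with
  | zero => exact ⟨0, rfl⟩
  | succ n ih =>
    obtain ⟨m, hm⟩ := ih
    refine ⟨m + len n + 1, ?_⟩
    rw [blockPos_succ, blockPos_add len hm _ le_rfl, if_neg (lt_irrefl _)]

end Blocks

namespace SimpleGraph

variable {W : Type*} {S : SimpleGraph W}

lemma Preconnected.subset_of_induce {s t : Set W} (hs : (S.induce s).Preconnected)
    {x : W} (hxs : x ∈ s) (hxt : x ∈ t)
    (ht : ∀ y ∈ s, ∀ z ∈ s, S.Adj y z → y ∈ t → z ∈ t) : s ⊆ t := by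
  have key : ∀ {y z : s} (p : (S.induce s).Walk y z), y.1 ∈ t → z.1 ∈ t := by
    intro y z p
    induction p with
    | nil => exact id
    | cons h _ ih => exact fun hy => ih (ht _ (Subtype.prop _) _ (Subtype.prop _) h hy)
  intro z hz
  obtain ⟨p⟩ := hs ⟨x, hxs⟩ ⟨z, hz⟩
  exact key p hxt

lemma Preconnected.exists_isPath_of_induce {s : Set W} (hs : (S.induce s).Preconnected)
    {x y : W} (hx : x ∈ s) (hy : y ∈ s) :
    ∃ p : S.Walk x y, p.IsPath ∧ ∀ z ∈ p.support, z ∈ s := by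
  classical
  obtain ⟨p⟩ := hs ⟨x, hx⟩ ⟨y, hy⟩
  refine ⟨p.bypass.map (Embedding.induce (G := S) s).toHom,
    p.bypass_isPath.map (Embedding.induce (G := S) s).injective, ?_⟩
  intro z hz
  replace hz : z ∈ p.bypass.support.map (Embedding.induce (G := S) s).toHom := by
    rw [← Walk.support_map]
    exact hz
  obtain ⟨z', -, rfl⟩ := List.mem_map.1 hz
  exact z'.2

section ConcatRay

variable {c a : ℕ → W} (seg : ∀ n, S.Walk (c n) (a n))

def concatRay (m : ℕ) : W :=
  (seg (blockPos (fun n => (seg n).length) m).1).getVert (blockPos (fun n => (seg n).length) m).2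

lemma concatRay_eq {m n i : ℕ} (h : blockPos (fun n => (seg n).length) m = (n, i)) :
    concatRay seg m = (seg n).getVert i := by
  rw [concatRay, h]

lemma concatRay_mem_support (m : ℕ) :
    concatRay seg m ∈ (seg (blockPos (fun n => (seg n).length) m).1).support :=
  Walk.getVert_mem_support _ _

lemma concatRay_adj (hadj : ∀ n, S.Adj (a n) (c (n + 1))) (m : ℕ) :
    S.Adj (concatRay seg m) (concatRay seg (m + 1)) := by
  have hsucc := blockPos_succ (fun n => (seg n).length) m
  have hle := blockPos_snd_le (fun n => (seg n).length) m
  rcases hp : blockPos (fun n => (seg n).length) m with ⟨n, i⟩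
  rw [hp] at hsucc hle
  dsimp only at hsucc hle
  rw [concatRay_eq seg hp]
  split_ifs at hsucc with h
  · rw [concatRay_eq seg hsucc]
    exact (seg n).adj_getVert_succ h
  · rw [concatRay_eq seg hsucc, show i = (seg n).length by omega, Walk.getVert_length,
      Walk.getVert_zero]
    exact hadj n

lemma concatRay_injective (hpath : ∀ n, (seg n).IsPath)
    (hdisj : ∀ n n' x, x ∈ (seg n).support → x ∈ (seg n').support → n = n') :
    Function.Injective (concatRay seg) := by
  intro m m' h
  apply (strictMono_blockPos _).injective
  have hle := blockPos_snd_le (fun n => (seg n).length) m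
  have hle' := blockPos_snd_le (fun n => (seg n).length) m'
  simp only [Function.comp_apply, EmbeddingLike.apply_eq_iff_eq]
  rcases hp : blockPos (fun n => (seg n).length) m with ⟨n, i⟩
  rcases hp' : blockPos (fun n => (seg n).length) m' with ⟨n', i'⟩
  rw [hp] at hle
  rw [hp'] at hle'
  rw [concatRay_eq seg hp, concatRay_eq seg hp'] at h
  dsimp only at hle hle'
  obtain rfl : n = n' :=
    hdisj n n' _ (Walk.getVert_mem_support _ _) (by rw [h]; exact Walk.getVert_mem_support _ _)
  rw [(hpath n).getVert_injOn hle hle' h]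

end ConcatRay

end SimpleGraph

lemma IsRay.eDeg_eq_two_iff {V : Type*} {G : SimpleGraph V} {f : ℕ → V} (hf : IsRay G f)
    (n : ℕ) : eDeg G (f (n + 1)) = 2 ↔ G.neighborSet (f (n + 1)) ⊆ {f n, f (n + 2)} := by
  have hsub : {f n, f (n + 2)} ⊆ G.neighborSet (f (n + 1)) := by
    rintro _ (rfl | rfl)
    exacts [(hf.2 n).symm, hf.2 (n + 1)]
  have hpair : ({f n, f (n + 2)} : Set V).encard = 2 := Set.encard_pair (hf.1.ne (by omega))
  rw [eDeg]
  refine ⟨fun h => (Set.Finite.eq_of_subset_of_encard_le (Set.toFinite _) hsub ?_).ge,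
    fun h => ?_⟩
  · rw [h, hpair]
  · rw [h.antisymm hsub, hpair]

section Model

variable {V W : Type*} {T : SimpleGraph V} {S : SimpleGraph W} {μ : V → Set W}

lemma IsModel.eq_of_mem (hμ : IsModel T S μ) {v w : V} {z : W} (hv : z ∈ μ v)
    (hw : z ∈ μ w) : v = w :=
  by_contra fun h => Set.disjoint_left.mp (hμ.disjoint v w h) hv hw

structure IsLiftedRay (S : SimpleGraph W) (μ : V → Set W) (f : ℕ → V) (g : ℕ → W)
    (block : ℕ → ℕ) : Prop where
  isRay : IsRay S g
  mem : ∀ m, g m ∈ μ (f (block m))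
  block_le : ∀ m, block m ≤ m
  block_succ : ∀ m, block (m + 1) = block m ∨ block (m + 1) = block m + 1
  block_surjective : Function.Surjective block

lemma IsModel.exists_isLiftedRay (hμ : IsModel T S μ) {f : ℕ → V} (hf : IsRay T f) :
    ∃ g block, IsLiftedRay S μ f g block := by
  choose a ha b hb hab using fun n => hμ.edge _ _ (hf.2 n)
  let c : ℕ → W := fun | 0 => a 0 | n + 1 => b n
  have hc : ∀ n, c n ∈ μ (f n) := fun | 0 => ha 0 | n + 1 => hb n
  choose seg hpath hsupp using
    fun n => (hμ.connected (f n)).preconnected.exists_isPath_of_induce (hc n) (ha n)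
  have hdisj : ∀ n n' x, x ∈ (seg n).support → x ∈ (seg n').support → n = n' :=
    fun n n' x hx hx' => hf.1 (hμ.eq_of_mem (hsupp n x hx) (hsupp n' x hx'))
  exact ⟨concatRay seg, _,
    ⟨concatRay_injective seg hpath hdisj, concatRay_adj seg hab⟩,
    fun m => hsupp _ _ (concatRay_mem_support seg m),
    blockPos_fst_le _, blockPos_fst_succ _, blockPos_fst_surjective _⟩

namespace IsLiftedRay

variable {f : ℕ → V} {g : ℕ → W} {block : ℕ → ℕ}
  (hg : IsLiftedRay S μ f g block) (hμ : IsModel T S μ) (hf : IsRay T f)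
include hg hμ hf

section BareTail

variable {M : ℕ} (hM : ∀ m ≥ M, eDeg S (g m) = 2)
include hM

lemma exists_eq_of_adj {n m : ℕ} {y : W} (hn : M < n) (hm : g m ∈ μ (f n))
    (hy : S.Adj (g m) y) :
    ∃ m', g m' = y ∧ (block m' + 1 = n ∨ block m' = n ∨ block m' = n + 1) := by
  have hblock : block m = n := hf.1 (hμ.eq_of_mem (hg.mem m) hm)
  obtain ⟨j, rfl⟩ : ∃ j, m = j + 1 := ⟨m - 1, by have := hg.block_le m; omega⟩
  have hbare := hM (j + 1) (by have := hg.block_le (j + 1); omega)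
  rcases (hg.isRay.eDeg_eq_two_iff j).1 hbare hy with rfl | rfl
  · exact ⟨j, rfl, by rcases hg.block_succ j with h | h <;> omega⟩
  · exact ⟨j + 1 + 1, rfl, by rcases hg.block_succ (j + 1) with h | h <;> omega⟩

lemma branchSet_subset_range {n : ℕ} (hn : M < n) : μ (f n) ⊆ Set.range g := by
  obtain ⟨m₀, rfl⟩ := hg.block_surjective n
  refine (hμ.connected _).preconnected.subset_of_induce (hg.mem m₀) ⟨m₀, rfl⟩ ?_
  rintro _ hy _ - hadj ⟨m, rfl⟩
  obtain ⟨m', rfl, -⟩ := hg.exists_eq_of_adj hμ hf hM hn hy hadj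
  exact ⟨m', rfl⟩

lemma neighborSet_subset {k : ℕ} (hk : M ≤ k) :
    T.neighborSet (f (k + 1)) ⊆ {f k, f (k + 2)} := by
  intro u hu
  obtain ⟨x, hx, y, hy, hxy⟩ := hμ.edge _ _ hu
  obtain ⟨m, rfl⟩ := hg.branchSet_subset_range hμ hf hM (by omega) hx
  obtain ⟨m', rfl, hm'⟩ := hg.exists_eq_of_adj hμ hf hM (by omega) hx hxy
  obtain rfl := hμ.eq_of_mem (hg.mem m') hy
  rcases hm' with h | h | h
  · exact Or.inl (congrArg f (by omega))
  · exact absurd hu (by rw [h]; exact T.irrefl)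
  · exact Or.inr (congrArg f h)

end BareTail

lemma eventuallyBare (hbare : EventuallyBare S g) : EventuallyBare T f := by
  obtain ⟨M, hM⟩ := hbare
  refine ⟨M + 1, fun n hn => ?_⟩
  obtain ⟨k, rfl⟩ : ∃ k, n = k + 1 := ⟨n - 1, by omega⟩
  exact (hf.eDeg_eq_two_iff k).2 (hg.neighborSet_subset hμ hf hM (by omega))

end IsLiftedRay

end Model

theorem stmt0_general {V W : Type*} (T : SimpleGraph V) (S : SimpleGraph W)
    (hSsmall : IsSmall S) (h : IsMinorOf T S) :
    IsSmall T := by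
  intro f hf
  obtain ⟨μ, hμ⟩ := h
  obtain ⟨g, block, hg⟩ := hμ.exists_isLiftedRay hf
  exact hg.eventuallyBare hμ hf (hSsmall g hg.isRay)

/-- If a tree `S` is small and `T` is a minor of `S`, then `T` is small. -/
theorem stmt0 {V W : Type*} (T : SimpleGraph V) (S : SimpleGraph W)
    (hT : T.IsTree) (hS : S.IsTree) (hSsmall : IsSmall S) (h : IsMinorOf T S) :
    IsSmall T :=
  stmt0_general T S hSsmall h
end

section
/- Let T and S be trees and μ a model of T in S. If v is a vertex of T of infinite degree, then either μ(v) contains a vertex of S of infinite degree, or μ(v) contains a ray of S that is not eventually bare. -/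
open SimpleGraph

/-! If every vertex of `μ v` has finite degree, then the edges of `S` witnessing the infinitely
many edges of `T` at `v` leave `μ v` into pairwise disjoint branch sets, so infinitely many
vertices of `μ v` have a neighbour outside `μ v`. In the connected, locally finite graph induced
on `μ v`, a König argument gives a geodesic ray from a root `r` each of whose vertices `x` has
infinitely many such boundary vertices in its cone `{b | d(r, b) = d(r, x) + d(x, b)}`. If the
ray were eventually bare, its late vertices would have no neighbours besides their two ray
neighbours and would not be boundary vertices; a shortest path from such a vertex to a boundary
vertex of its cone would then be forced along the ray forever. -/

open Filter Set

lemma exists_seq_of_forall_exists {α : Type*} {P : α → Prop} {R : α → α → Prop}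
    (h : ∀ a, P a → ∃ b, P b ∧ R a b) {a : α} (ha : P a) :
    ∃ s : ℕ → α, s 0 = a ∧ ∀ n, P (s n) ∧ R (s n) (s (n + 1)) := by
  choose g hg using fun x : {x // P x} => h x.1 x.2
  let next : {x // P x} → {x // P x} := fun x => ⟨g x, (hg x).1⟩
  refine ⟨fun n => (next^[n] ⟨a, ha⟩).1, rfl, fun n => ⟨(next^[n] ⟨a, ha⟩).2, ?_⟩⟩
  simp only [Function.iterate_succ_apply']
  exact (hg _).2

namespace Set

variable {α : Type*} {s : Set α}

lemma eq_or_eq_of_encard_le_two (hs : s.encard ≤ 2) {a b z : α} (ha : a ∈ s) (hb : b ∈ s)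
    (hab : a ≠ b) (hz : z ∈ s) : z = a ∨ z = b := by
  have hpair : ({a, b} : Set α) = s :=
    (toFinite _).eq_of_subset_of_encard_le (pair_subset ha hb) (by rwa [encard_pair hab])
  rw [← hpair] at hz
  exact hz

lemma three_le_encard {a b c : α} (ha : a ∈ s) (hb : b ∈ s) (hc : c ∈ s)
    (hab : a ≠ b) (hac : a ≠ c) (hbc : b ≠ c) : 3 ≤ s.encard := by
  have h3 : ({a, b, c} : Set α).encard = 3 := by
    rw [encard_insert_of_notMem (by simp [hab, hac]), encard_pair hbc]; rfl
  exact h3 ▸ encard_le_encard (insert_subset ha (pair_subset hb hc))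

end Set

namespace SimpleGraph

variable {V : Type*} {G : SimpleGraph V}

lemma Connected.exists_adj_dist_add_one (hG : G.Connected) {u v : V} (hne : u ≠ v) :
    ∃ w, G.Adj u w ∧ G.dist w v + 1 = G.dist u v := by
  obtain ⟨p, hp⟩ := hG.exists_walk_length_eq_dist u v
  have hp_ne : ¬ p.Nil := fun h => hne h.eq
  refine ⟨p.snd, p.adj_snd hp_ne, le_antisymm ?_ ?_⟩
  · rw [← hp, ← p.length_tail_add_one hp_ne]
    exact Nat.add_le_add_right (dist_le p.tail) 1
  · have := hG.dist_triangle (u := u) (v := p.snd) (w := v)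
    rw [dist_eq_one_iff_adj.mpr (p.adj_snd hp_ne)] at this
    omega

def cone (G : SimpleGraph V) (r x : V) : Set V :=
  {b | G.dist r b = G.dist r x + G.dist x b}

lemma cone_self (r : V) : G.cone r r = univ := by
  ext b; simp [cone]

lemma Connected.exists_adj_mem_cone (hG : G.Connected) {r x b : V} (hb : b ∈ G.cone r x)
    (hne : x ≠ b) : ∃ y, G.Adj x y ∧ G.dist r y = G.dist r x + 1 ∧ b ∈ G.cone r y ∧
      G.dist y b < G.dist x b := by
  obtain ⟨y, hxy, hyb⟩ := hG.exists_adj_dist_add_one hne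
  have hry : G.dist r y ≤ G.dist r x + 1 :=
    dist_eq_one_iff_adj.mpr hxy ▸ hG.dist_triangle
  have hrb : G.dist r b ≤ G.dist r y + G.dist y b := hG.dist_triangle
  simp only [cone, mem_ofPred_eq] at hb ⊢
  exact ⟨y, hxy, by omega, by omega, by omega⟩

lemma Connected.exists_adj_infinite_cone (hG : G.Connected) {B : Set V} {r x : V}
    (hx : (G.neighborSet x).Finite) (hB : (B ∩ G.cone r x).Infinite) :
    ∃ y, G.Adj x y ∧ G.dist r y = G.dist r x + 1 ∧ (B ∩ G.cone r y).Infinite := by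
  have hcover : (B ∩ G.cone r x) \ {x} ⊆
      ⋃ y ∈ {y ∈ G.neighborSet x | G.dist r y = G.dist r x + 1}, B ∩ G.cone r y := by
    rintro b ⟨⟨hbB, hb⟩, hbx⟩
    obtain ⟨y, hxy, hry, hby, -⟩ := hG.exists_adj_mem_cone hb (Ne.symm hbx)
    exact mem_biUnion ⟨hxy, hry⟩ ⟨hbB, hby⟩
  by_contra! hfin
  refine (hB.sdiff (finite_singleton x)) (((hx.sep _).biUnion ?_).subset hcover)
  rintro y ⟨hxy, hry⟩
  exact hfin y hxy hry

lemma Connected.exists_geodesic_seq_infinite_cone (hG : G.Connected)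
    (hfin : ∀ x, (G.neighborSet x).Finite) {B : Set V} (hB : B.Infinite) :
    ∃ f : ℕ → V, (∀ n, G.Adj (f n) (f (n + 1))) ∧ (∀ n, G.dist (f 0) (f n) = n) ∧
      ∀ n, (B ∩ G.cone (f 0) (f n)).Infinite := by
  obtain ⟨r⟩ := hG.nonempty
  obtain ⟨f, rfl, hf⟩ := exists_seq_of_forall_exists
    (P := fun x => (B ∩ G.cone r x).Infinite)
    (R := fun x y => G.Adj x y ∧ G.dist r y = G.dist r x + 1)
    (fun x hx => by
      obtain ⟨y, hxy, hry, hy⟩ := hG.exists_adj_infinite_cone (hfin x) hx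
      exact ⟨y, hy, hxy, hry⟩)
    (a := r) (by rwa [cone_self, inter_univ])
  refine ⟨f, fun n => (hf n).2.1, fun n => ?_, fun n => (hf n).1⟩
  induction n with
  | zero => exact dist_self
  | succ n ih => rw [(hf n).2.2, ih]

lemma Connected.frequently_mem_or_two_lt_eDeg (hG : G.Connected) {B : Set V} {f : ℕ → V}
    (hadj : ∀ n, G.Adj (f n) (f (n + 1))) (hdist : ∀ n, G.dist (f 0) (f n) = n)
    (hcone : ∀ n, (B ∩ G.cone (f 0) (f n)).Infinite) :
    ∃ᶠ n in atTop, f n ∈ B ∨ 2 < eDeg G (f n) := by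
  rw [frequently_atTop]
  by_contra! ⟨M, hM⟩
  -- Past `M` a ray vertex has only its two ray neighbours, so a shortest path from `f n` to a
  -- vertex of its cone must continue along the ray.
  have key : ∀ d n b, M < n → b ∈ B ∩ G.cone (f 0) (f n) → G.dist (f n) b ≠ d := by
    intro d
    induction d using Nat.strong_induction_on with
    | _ d ih =>
    rintro (_ | m) b hm ⟨hbB, hb⟩ rfl
    · omega
    obtain ⟨y, hxy, hry, hby, hlt⟩ :=
      hG.exists_adj_mem_cone hb (fun h => (hM _ hm.le).1 (h ▸ hbB))
    have hne : f m ≠ f (m + 2) := fun h => by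
      have := congrArg (G.dist (f 0)) h
      rw [hdist, hdist] at this
      omega
    rcases eq_or_eq_of_encard_le_two (hM _ hm.le).2 (hadj m).symm (hadj (m + 1)) hne hxy
      with rfl | rfl
    · rw [hdist, hdist] at hry
      omega
    · exact ih _ hlt (m + 2) b (by omega) ⟨hbB, hby⟩ rfl
  obtain ⟨b, hb⟩ := (hcone (M + 1)).nonempty
  exact key _ (M + 1) b (by omega) hb rfl

theorem Connected.exists_ray_frequently_mem_or_two_lt_eDeg (hG : G.Connected)
    (hfin : ∀ x, (G.neighborSet x).Finite) {B : Set V} (hB : B.Infinite) :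
    ∃ f : ℕ → V, IsRay G f ∧ ∃ᶠ n in atTop, f n ∈ B ∨ 2 < eDeg G (f n) := by
  obtain ⟨f, hadj, hdist, hcone⟩ := hG.exists_geodesic_seq_infinite_cone hfin hB
  refine ⟨f, ⟨fun m n h => ?_, hadj⟩, hG.frequently_mem_or_two_lt_eDeg hadj hdist hcone⟩
  simpa only [hdist] using congrArg (G.dist (f 0)) h

def innerBoundary (G : SimpleGraph V) (A : Set V) : Set V :=
  {x ∈ A | ∃ c ∉ A, G.Adj x c}

theorem exists_ray_not_eventuallyBare {A : Set V} (hA : (G.induce A).Connected)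
    (hfin : ∀ x ∈ A, (G.neighborSet x).Finite) (hB : (G.innerBoundary A).Infinite) :
    ∃ f : ℕ → V, IsRay G f ∧ ¬ EventuallyBare G f ∧ ∀ n, f n ∈ A := by
  have hnbr (x : A) : (G.induce A).neighborSet x = Subtype.val ⁻¹' G.neighborSet x := rfl
  obtain ⟨g, ⟨hinj, hadj⟩, hfreq⟩ := hA.exists_ray_frequently_mem_or_two_lt_eDeg
    (fun x => hnbr x ▸ (hfin x x.2).preimage Subtype.val_injective.injOn)
    (B := Subtype.val ⁻¹' G.innerBoundary A) (hB.preimage fun x hx => ⟨⟨x, hx.1⟩, rfl⟩)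
  refine ⟨fun n => g n, ⟨Subtype.val_injective.comp hinj, hadj⟩, ?_, fun n => (g n).2⟩
  rintro ⟨M, hM⟩
  obtain ⟨_ | m, hm, hgm⟩ := frequently_atTop.mp hfreq (M + 1)
  · omega
  have hdeg : eDeg G (g (m + 1)) = 2 := hM _ (by omega)
  rcases hgm with ⟨-, c, hcA, hc⟩ | hlt
  · have hne : (g m : V) ≠ g (m + 2) := fun h => by
      simpa using hinj (Subtype.val_injective h)
    have h3 := three_le_encard (hadj m).symm (hadj (m + 1)) hc hne
      (fun h => hcA (h ▸ (g m).2)) (fun h => hcA (h ▸ (g (m + 2)).2))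
    exact absurd (h3.trans_eq hdeg) (by decide)
  · have hle : eDeg (G.induce A) (g (m + 1)) ≤ eDeg G (g (m + 1)) :=
      (congrArg encard (hnbr _)).trans_le (encard_preimage_val_le_encard_right _ _)
    exact absurd (hlt.trans_le (hle.trans_eq hdeg)) (lt_irrefl _)

end SimpleGraph

theorem IsModel.infinite_innerBoundary {V W : Type*} {T : SimpleGraph V} {S : SimpleGraph W}
    {μ : V → Set W} (hμ : IsModel T S μ) {v : V} (hv : (T.neighborSet v).Infinite)
    (hfin : ∀ x ∈ μ v, (S.neighborSet x).Finite) : (S.innerBoundary (μ v)).Infinite := by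
  have hdisj {w w' : V} (h : w ≠ w') {x : W} (hx : x ∈ μ w) : x ∉ μ w' :=
    disjoint_left.mp (hμ.disjoint w w' h) hx
  have hwitness : ∀ w ∈ T.neighborSet v,
      ∃ c ∈ ⋃ x ∈ S.innerBoundary (μ v), S.neighborSet x, c ∈ μ w := by
    intro w hw
    obtain ⟨a, ha, c, hc, hac⟩ := hμ.edge v w hw
    exact ⟨c, mem_biUnion ⟨ha, c, hdisj (T.ne_of_adj hw).symm hc, hac⟩ hac, hc⟩
  have : Nonempty W := (hμ.nonempty v).to_subtype.map Subtype.val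
  choose! c hc hcμ using hwitness
  intro hB
  refine infinite_of_injOn_mapsTo (fun w hw w' hw' h => ?_) hc hv
    (hB.biUnion fun x hx => hfin x hx.1)
  by_contra hne
  exact hdisj hne (hcμ w hw) (h ▸ hcμ w' hw')

theorem stmt2_general {V W : Type*} (T : SimpleGraph V) (S : SimpleGraph W)
    (μ : V → Set W) (hμ : IsModel T S μ)
    (v : V) (hv : eDeg T v = ⊤) :
    (∃ w ∈ μ v, eDeg S w = ⊤) ∨
      ∃ f : ℕ → W, IsRay S f ∧ ¬ EventuallyBare S f ∧ ∀ n, f n ∈ μ v := by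
  refine or_iff_not_imp_left.mpr fun hinf => ?_
  have hfin : ∀ w ∈ μ v, (S.neighborSet w).Finite := fun w hw =>
    encard_ne_top_iff.mp fun h => hinf ⟨w, hw, h⟩
  exact exists_ray_not_eventuallyBare (hμ.connected v) hfin
    (hμ.infinite_innerBoundary (encard_eq_top_iff.mp hv) hfin)

/-- If `μ` is a model of the tree `T` in the tree `S` and `v` has infinite
degree in `T`, then `μ v` contains a vertex of infinite degree of `S`, or `μ v` contains a
ray of `S` that is not eventually bare. -/
theorem stmt2 {V W : Type*} (T : SimpleGraph V) (S : SimpleGraph W)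
    (hT : T.IsTree) (hS : S.IsTree) (μ : V → Set W) (hμ : IsModel T S μ)
    (v : V) (hv : eDeg T v = ⊤) :
    (∃ w ∈ μ v, eDeg S w = ⊤) ∨
      ∃ f : ℕ → W, IsRay S f ∧ ¬ EventuallyBare S f ∧ ∀ n, f n ∈ μ v :=
  stmt2_general T S μ hμ v hv
end

section
/- If T and S are trees that are minors of each other and both have only finitely many vertices of degree greater than 2, then |F(T)| = |F(S)|, where F(G) is the set of vertices of G of degree greater than 2. -/
open SimpleGraph

/-!
A branch set `μ v` of a model of `T` in `S` is connected, and if `v` has three neighbours in `T`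
then `μ v` is joined to three distinct vertices outside it, lying in the disjoint branch sets of
those neighbours. Such a connected set contains a vertex of degree `> 2` in `S`: a path through it
between two of the attachments, extended by the two outer vertices, already gives each of its
inner vertices two neighbours, and a route to the third attachment leaves the path at one of them.
As branch sets are disjoint, this injects `F(T)` into `F(S)`; mutual minors give equality.
-/

namespace SimpleGraph

variable {W : Type*} {S : SimpleGraph W}

theorem two_lt_eDeg_iff {x : W} :
    2 < eDeg S x ↔ ∃ a b c, a ≠ b ∧ a ≠ c ∧ b ≠ c ∧ S.Adj x a ∧ S.Adj x b ∧ S.Adj x c := by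
  constructor
  · intro h
    obtain ⟨t, hts, ht⟩ := Set.exists_subset_encard_eq (Order.add_one_le_of_lt h)
    obtain ⟨a, b, c, hab, hac, hbc, rfl⟩ := Set.encard_eq_three.1 ht
    exact ⟨a, b, c, hab, hac, hbc, hts (by simp), hts (by simp), hts (by simp)⟩
  · rintro ⟨a, b, c, hab, hac, hbc, ha, hb, hc⟩
    have h3 : ({a, b, c} : Set W).encard = 3 := Set.encard_eq_three.2 ⟨a, b, c, hab, hac, hbc, rfl⟩
    have hsub : ({a, b, c} : Set W) ⊆ S.neighborSet x := by
      rintro z (rfl | rfl | rfl) <;> assumption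
    exact lt_of_lt_of_le (by norm_num) (h3 ▸ Set.encard_mono hsub)

/-- An inner vertex of a path already has two neighbours on it. -/
theorem Walk.IsPath.two_lt_eDeg_of_adj_notMem_support {u v x y : W} {p : S.Walk u v}
    (hp : p.IsPath) (hx : x ∈ p.support) (hxu : x ≠ u) (hxv : x ≠ v) (hxy : S.Adj x y)
    (hy : y ∉ p.support) : 2 < eDeg S x := by
  obtain ⟨n, rfl, hn⟩ := Walk.mem_support_iff_exists_getVert.1 hx
  have hn0 : n ≠ 0 := by rintro rfl; exact hxu p.getVert_zero
  have hnl : n ≠ p.length := by rintro rfl; exact hxv p.getVert_length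
  have hpred : S.Adj (p.getVert n) (p.getVert (n - 1)) := by
    simpa [Nat.sub_add_cancel (Nat.pos_of_ne_zero hn0)] using
      (p.adj_getVert_succ (i := n - 1) (by omega)).symm
  have hsucc : S.Adj (p.getVert n) (p.getVert (n + 1)) := p.adj_getVert_succ (by omega)
  have hne : p.getVert (n - 1) ≠ p.getVert (n + 1) := fun h =>
    absurd (hp.getVert_injOn (by simp; omega) (by simp; omega) h) (by omega)
  exact two_lt_eDeg_iff.2 ⟨_, _, y, hne, fun h => hy (h ▸ p.getVert_mem_support _),
    fun h => hy (h ▸ p.getVert_mem_support _), hpred, hsucc, hxy⟩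

theorem exists_walk_isPath_support_subset_of_connected_induce {C : Set W}
    (hC : (S.induce C).Connected) {x y : W} (hx : x ∈ C) (hy : y ∈ C) :
    ∃ p : S.Walk x y, p.IsPath ∧ ∀ z ∈ p.support, z ∈ C := by
  classical
  let q := (hC.preconnected ⟨x, hx⟩ ⟨y, hy⟩).some.toPath
  refine ⟨q.1.map (Embedding.induce (G := S) C).toHom,
    Walk.IsPath.map (Embedding.induce (G := S) C).injective q.2, ?_⟩
  intro z hz
  obtain ⟨z', -, rfl⟩ := List.mem_map.1 ((Walk.support_map _ _).subst (motive := (z ∈ ·)) hz)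
  exact z'.2

/-- Every vertex of `C` on the path `a₁ - b₁ ⋯ b₂ - a₂` has two neighbours on it, and the walk
from `b₁` through `C` to `b₃` and on to `a₃` must leave that path at such a vertex. -/
theorem exists_mem_two_lt_eDeg_of_connected_induce {C : Set W} (hC : (S.induce C).Connected)
    {b₁ b₂ b₃ a₁ a₂ a₃ : W} (hb₁ : b₁ ∈ C) (hb₂ : b₂ ∈ C) (hb₃ : b₃ ∈ C)
    (ha₁ : a₁ ∉ C) (ha₂ : a₂ ∉ C) (ha₃ : a₃ ∉ C)
    (h₁₂ : a₁ ≠ a₂) (h₁₃ : a₁ ≠ a₃) (h₂₃ : a₂ ≠ a₃)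
    (hA₁ : S.Adj b₁ a₁) (hA₂ : S.Adj b₂ a₂) (hA₃ : S.Adj b₃ a₃) :
    ∃ x ∈ C, 2 < eDeg S x := by
  obtain ⟨p, hp, hpC⟩ := exists_walk_isPath_support_subset_of_connected_induce hC hb₁ hb₂
  obtain ⟨q, -, hqC⟩ := exists_walk_isPath_support_subset_of_connected_induce hC hb₁ hb₃
  let P := Walk.cons hA₁.symm (p.concat hA₂)
  have hPsupp : ∀ z, z ∈ P.support ↔ z = a₁ ∨ z ∈ p.support ∨ z = a₂ := by
    simp [P, Walk.support_concat]
  have hP : P.IsPath := by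
    refine (hp.concat (fun h => ha₂ (hpC _ h)) hA₂).cons ?_
    rw [Walk.support_concat, List.mem_append, List.mem_singleton]
    rintro (h | h)
    exacts [ha₁ (hpC _ h), h₁₂ h]
  have ha₃P : a₃ ∉ P.support := by
    rw [hPsupp]
    rintro (h | h | h)
    exacts [h₁₃ h.symm, ha₃ (hpC _ h), h₂₃ h.symm]
  obtain ⟨d, hd, hdP, hdP'⟩ :=
    (q.concat hA₃).exists_boundary_dart {z | z ∈ P.support}
      ((hPsupp _).2 (.inr (.inl p.start_mem_support))) ha₃P
  have hdC : d.fst ∈ C := by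
    have := (q.concat hA₃).dart_fst_mem_support_of_mem_darts hd
    rw [Walk.support_concat, List.mem_append, List.mem_singleton] at this
    rcases this with h | h
    exacts [hqC _ h, absurd (h ▸ hdP) ha₃P]
  refine ⟨d.fst, hdC, hP.two_lt_eDeg_of_adj_notMem_support hdP ?_ ?_ d.adj hdP'⟩
  exacts [fun h => ha₁ (h ▸ hdC), fun h => ha₂ (h ▸ hdC)]

end SimpleGraph

namespace IsModel

variable {V W : Type*} {T : SimpleGraph V} {S : SimpleGraph W} {μ : V → Set W}

theorem exists_mem_two_lt_eDeg (hμ : IsModel T S μ) {v : V} (hv : 2 < eDeg T v) :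
    ∃ w ∈ μ v, 2 < eDeg S w := by
  obtain ⟨v₁, v₂, v₃, h₁₂, h₁₃, h₂₃, hv₁, hv₂, hv₃⟩ := two_lt_eDeg_iff.1 hv
  obtain ⟨b₁, hb₁, a₁, ha₁, hA₁⟩ := hμ.edge v v₁ hv₁
  obtain ⟨b₂, hb₂, a₂, ha₂, hA₂⟩ := hμ.edge v v₂ hv₂
  obtain ⟨b₃, hb₃, a₃, ha₃, hA₃⟩ := hμ.edge v v₃ hv₃
  have hne : ∀ {x y : V} {a b : W}, x ≠ y → a ∈ μ x → b ∈ μ y → a ≠ b :=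
    fun hxy ha hb => Set.disjoint_iff_forall_ne.1 (hμ.disjoint _ _ hxy) ha hb
  have hout : ∀ {x : V} {a : W}, T.Adj v x → a ∈ μ x → a ∉ μ v :=
    fun hx ha hav => hne hx.ne hav ha rfl
  exact exists_mem_two_lt_eDeg_of_connected_induce (hμ.connected v) hb₁ hb₂ hb₃
    (hout hv₁ ha₁) (hout hv₂ ha₂) (hout hv₃ ha₃) (hne h₁₂ ha₁ ha₂) (hne h₁₃ ha₁ ha₃)
    (hne h₂₃ ha₂ ha₃) hA₁ hA₂ hA₃

/-- Disjointness of the branch sets makes a choice of such vertices injective. -/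
theorem ncard_two_lt_eDeg_le (hμ : IsModel T S μ) (hS : {w : W | 2 < eDeg S w}.Finite) :
    {v : V | 2 < eDeg T v}.ncard ≤ {w : W | 2 < eDeg S w}.ncard := by
  have := hS.to_subtype
  choose f hfμ hfS using fun v : {v : V | 2 < eDeg T v} => hμ.exists_mem_two_lt_eDeg v.2
  refine Nat.card_le_card_of_injective (fun v => ⟨f v, hfS v⟩) fun v v' hvv' => ?_
  by_contra hne
  exact Set.disjoint_iff_forall_ne.1 (hμ.disjoint v v' (Subtype.coe_ne_coe.2 hne)) (hfμ v)
    (hfμ v') (congrArg Subtype.val hvv')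

end IsModel

theorem stmt3_general {V W : Type*} (T : SimpleGraph V) (S : SimpleGraph W)
    (h1 : IsMinorOf T S) (h2 : IsMinorOf S T)
    (hfT : {v : V | 2 < eDeg T v}.Finite) (hfS : {w : W | 2 < eDeg S w}.Finite) :
    {v : V | 2 < eDeg T v}.ncard = {w : W | 2 < eDeg S w}.ncard := by
  obtain ⟨μ, hμ⟩ := h1
  obtain ⟨ν, hν⟩ := h2
  exact le_antisymm (hμ.ncard_two_lt_eDeg_le hfS) (hν.ncard_two_lt_eDeg_le hfT)

/-- Trees that are minors of each other and have finitely many vertices of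
degree `> 2` have equally many such vertices. -/
theorem stmt3 {V W : Type*} (T : SimpleGraph V) (S : SimpleGraph W)
    (hT : T.IsTree) (hS : S.IsTree) (h1 : IsMinorOf T S) (h2 : IsMinorOf S T)
    (hfT : {v : V | 2 < eDeg T v}.Finite) (hfS : {w : W | 2 < eDeg S w}.Finite) :
    {v : V | 2 < eDeg T v}.ncard = {w : W | 2 < eDeg S w}.ncard :=
  stmt3_general T S h1 h2 hfT hfS
end

section
/- If (T, r) is a small rooted tree, then every strictly increasing (with respect to the tree order) infinite sequence of vertices of T spans an eventually bare ray; in particular any such sequence has a tail along which all vertices have degree 2. -/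
open SimpleGraph

private lemma getVert_mem_support' {V : Type*} {G : SimpleGraph V} {u v : V}
    (p : G.Walk u v) (i : ℕ) : p.getVert i ∈ p.support := by
  induction p generalizing i with
  | nil => simp [Walk.getVert]
  | cons h q ih =>
    cases i with
    | zero => simp
    | succ i =>
      rw [Walk.support_cons]
      exact List.mem_cons_of_mem _ (ih i)

private lemma path_getVert_inj' {V : Type*} {G : SimpleGraph V} {u v : V} {p : G.Walk u v}
    (hp : p.IsPath) : ∀ i j, i ≤ p.length → j ≤ p.length →
    p.getVert i = p.getVert j → i = j := by
  induction p with
  | nil => intro i j hi hj _; simp [Walk.length_nil] at hi hj; omega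
  | cons h q ih =>
    intro i j hi hj hij
    rw [Walk.cons_isPath_iff] at hp
    rw [Walk.length_cons] at hi hj
    cases i with
    | zero =>
      cases j with
      | zero => rfl
      | succ j =>
        exfalso
        apply hp.2
        have hmem : (Walk.cons h q).getVert (j + 1) ∈ q.support := getVert_mem_support' q j
        rw [← hij, Walk.getVert_zero] at hmem
        exact hmem
    | succ i =>
      cases j with
      | zero =>
        exfalso
        apply hp.2
        have hmem : (Walk.cons h q).getVert (i + 1) ∈ q.support := getVert_mem_support' q i
        rw [hij, Walk.getVert_zero] at hmem
        exact hmem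
      | succ j =>
        have : i = j := ih hp.1 i j (by omega) (by omega) hij
        omega


/-- In a small rooted tree, every strictly increasing (in the tree order)
infinite sequence of vertices spans an eventually bare ray; in particular the degrees
along the sequence are eventually `2`. -/
theorem stmt10 {V : Type*} (T : SimpleGraph V) (r : V) (hT : T.IsTree)
    (hsmall : IsSmall T) (f : ℕ → V)
    (hmono : ∀ n, treeLE T r (f n) (f (n + 1))) (hne : ∀ n, f n ≠ f (n + 1)) :
    (∃ g : ℕ → V, IsRay T g ∧ EventuallyBare T g ∧
      Set.range g = treeClosure T (Set.range f)) ∧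
    ∃ M : ℕ, ∀ n ≥ M, eDeg T (f n) = 2 := by
  classical
  have uniq : ∀ {u v : V} (p q : T.Walk u v), p.IsPath → q.IsPath → p = q := by
    intro u v p q hp hq
    exact ((hT.existsUnique_path u v).unique hp hq)
  choose P hP using fun n => (hT.existsUnique_path r (f n)).exists
  -- f n lies on the path to f (n+1)
  have hmem : ∀ n, f n ∈ (P (n + 1)).support := by
    intro n
    rcases hmono n with h | ⟨p, hp, hm⟩
    · exact absurd h (hne n)
    · rwa [uniq p (P (n + 1)) hp (hP (n + 1))] at hm
  have htake : ∀ n, (P (n + 1)).takeUntil (f n) (hmem n) = P n :=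
    fun n => uniq _ _ ((hP (n + 1)).takeUntil _) (hP n)
  -- lengths strictly increase
  have Lstep : ∀ n, (P n).length + 1 ≤ (P (n + 1)).length := by
    intro n
    have hspec := congrArg Walk.length ((P (n + 1)).take_spec (hmem n))
    rw [Walk.length_append, htake n] at hspec
    have hd : ((P (n + 1)).dropUntil (f n) (hmem n)).length ≠ 0 := by
      intro h0
      exact hne n (Walk.eq_of_length_eq_zero h0)
    omega
  have Lle : ∀ n m, n ≤ m → (P n).length ≤ (P m).length := by
    intro n m hnm
    induction m with
    | zero => obtain rfl : n = 0 := Nat.le_zero.mp hnm; rfl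
    | succ m ih =>
      rcases Nat.lt_or_ge n (m + 1) with h | h
      · exact le_trans (ih (Nat.lt_succ_iff.mp h)) (by have := Lstep m; omega)
      · obtain rfl : n = m + 1 := le_antisymm hnm h; rfl
  have LgeN : ∀ n, n + (P 0).length ≤ (P n).length := by
    intro n
    induction n with
    | zero => omega
    | succ n ih => have := Lstep n; omega
  -- single prefix step
  have step : ∀ m k, k ≤ (P m).length → (P (m + 1)).getVert k = (P m).getVert k := by
    intro m k hk
    conv_lhs => rw [← (P (m + 1)).take_spec (hmem m)]
    rw [Walk.getVert_append, htake m]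
    rcases eq_or_lt_of_le hk with rfl | h
    · rw [if_neg (lt_irrefl _), Nat.sub_self, Walk.getVert_zero, Walk.getVert_length]
    · rw [if_pos h]
  -- general prefix property
  have pre : ∀ n m, n ≤ m → ∀ k, k ≤ (P n).length → (P m).getVert k = (P n).getVert k := by
    intro n m hnm
    induction m with
    | zero => intro k hk; obtain rfl : n = 0 := Nat.le_zero.mp hnm; rfl
    | succ m ih =>
      intro k hk
      rcases Nat.lt_or_ge n (m + 1) with h | h
      · have hnm' : n ≤ m := Nat.lt_succ_iff.mp h
        rw [step m k (le_trans hk (Lle n m hnm')), ih hnm' k hk]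
      · obtain rfl : n = m + 1 := le_antisymm hnm h; rfl
  -- the vertex f a sits at position (P a).length in every later path
  have hfpos : ∀ a m, a ≤ m → (P m).getVert ((P a).length) = f a := by
    intro a m h
    rw [pre a m h _ le_rfl]
    exact (P a).getVert_length
  have hmemsup : ∀ a m, a ≤ m → f a ∈ (P m).support := by
    intro a m h
    rw [← hfpos a m h]
    exact getVert_mem_support' _ _
  have htakeGen : ∀ a m (h : a ≤ m), (P m).takeUntil (f a) (hmemsup a m h) = P a :=
    fun a m h => uniq _ _ ((hP m).takeUntil _) (hP a)
  have hdropGet : ∀ a m (h : a ≤ m) (j : ℕ),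
      ((P m).dropUntil (f a) (hmemsup a m h)).getVert j
        = (P m).getVert ((P a).length + j) := by
    intro a m h j
    conv_rhs => rw [← (P m).take_spec (hmemsup a m h)]
    rw [Walk.getVert_append, htakeGen a m h, if_neg (by omega), Nat.add_sub_cancel_left]
  have hdroplen : ∀ a m (h : a ≤ m),
      (P a).length + ((P m).dropUntil (f a) (hmemsup a m h)).length = (P m).length := by
    intro a m h
    have hspec := congrArg Walk.length ((P m).take_spec (hmemsup a m h))
    rwa [Walk.length_append, htakeGen a m h] at hspec
  -- the ray
  set c := (P 0).length with hc
  set g : ℕ → V := fun k => (P k).getVert (k + c) with hg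
  have hgm : ∀ k m, k ≤ m → g k = (P m).getVert (k + c) := by
    intro k m h
    have : k + c ≤ (P k).length := LgeN k
    exact (pre k m h _ this).symm
  have hray : IsRay T g := by
    constructor
    · have aux : ∀ j k, j ≤ k → g j = g k → j = k := by
        intro j k hjk hgjk
        rw [hgm j k hjk, hgm k k le_rfl] at hgjk
        have h1 : j + c ≤ (P k).length := le_trans (by omega) (LgeN k)
        have h2 : k + c ≤ (P k).length := LgeN k
        have := path_getVert_inj' (hP k) _ _ h1 h2 hgjk
        omega
      intro j k h
      rcases le_total j k with hjk | hjk
      · exact aux j k hjk h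
      · exact (aux k j hjk h.symm).symm
    · intro k
      rw [hgm k (k + 1) (by omega), hgm (k + 1) (k + 1) le_rfl]
      have hlt : k + c < (P (k + 1)).length := by have := LgeN (k + 1); omega
      have := (P (k + 1)).adj_getVert_succ hlt
      convert this using 2
      omega
  obtain ⟨M, hM⟩ := hsmall g hray
  -- f n = g ((P n).length - c)
  have hfg : ∀ n, f n = g ((P n).length - c) := by
    intro n
    have hcn : c ≤ (P n).length := le_trans (by omega) (LgeN n)
    set m := max n ((P n).length - c) with hm
    have h1 : g ((P n).length - c) = (P m).getVert ((P n).length - c + c) :=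
      hgm _ m (le_max_right _ _)
    rw [h1]
    have : (P n).length - c + c = (P n).length := by omega
    rw [this, pre n m (le_max_left _ _) _ le_rfl, (P n).getVert_length]
  refine ⟨⟨g, hray, ⟨M, hM⟩, ?_⟩, ⟨M, fun n hn => ?_⟩⟩
  · -- range g = treeClosure T (range f)
    apply Set.Subset.antisymm
    · rintro x ⟨k, rfl⟩
      right
      refine ⟨f 0, ⟨0, rfl⟩, f k, ⟨k, rfl⟩,
        (P k).dropUntil (f 0) (hmemsup 0 k (Nat.zero_le _)), (hP k).dropUntil _, ?_⟩
      have h1 : ((P k).dropUntil (f 0) (hmemsup 0 k (Nat.zero_le _))).getVert k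
          = (P k).getVert (c + k) := hdropGet 0 k (Nat.zero_le _) k
      have h2 : g k = (P k).getVert (k + c) := hgm k k le_rfl
      rw [h2, Nat.add_comm k c, ← h1]
      exact getVert_mem_support' _ _
    · have key : ∀ a b, a ≤ b → ∀ x (p : T.Walk (f a) (f b)), p.IsPath → x ∈ p.support →
          x ∈ Set.range g := by
        intro a b hab x p hp hx
        rw [uniq p ((P b).dropUntil (f a) (hmemsup a b hab)) hp ((hP b).dropUntil _)] at hx
        obtain ⟨j, hj, hjle⟩ := Walk.mem_support_iff_exists_getVert.mp hx
        rw [hdropGet a b hab j] at hj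
        have hlen := hdroplen a b hab
        have hca : c ≤ (P a).length := le_trans (by omega) (LgeN a)
        refine ⟨(P a).length + j - c, ?_⟩
        set m := max b ((P a).length + j - c) with hm
        rw [hgm _ m (le_max_right _ _)]
        have he : (P a).length + j - c + c = (P a).length + j := by omega
        rw [he, pre b m (le_max_left _ _) _ (by omega)]
        exact hj
      rintro x (⟨n, rfl⟩ | ⟨a', ⟨a, rfl⟩, b', ⟨b, rfl⟩, p, hp, hx⟩)
      · exact ⟨(P n).length - c, (hfg n).symm⟩
      · rcases le_total a b with hab | hab
        · exact key a b hab _ p hp hx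
        · refine key b a hab _ p.reverse hp.reverse ?_
          rwa [Walk.support_reverse, List.mem_reverse]
  · -- eventually degree 2 along f
    rw [hfg n]
    apply hM
    have := LgeN n
    omega
end

section
/- If T is an infinite small tree, then the closure of the set inf(T) of infinite-degree vertices is a rayless subtree of T that contains no leaf (end-point) of T, and hence is properly contained in T. -/
open SimpleGraph

/-!
A vertex of the closure of `inf(T)` either has infinite degree or is an interior vertex of a
path between two such vertices, so it has at least two neighbours; in particular the closure
contains no leaf. A ray in the closure is, by smallness, eventually made of degree-2 vertices,
and a ray of degree-2 vertices that enters a path between two vertices of infinite degree is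
forced to run along that path until it hits one of its ends, which is absurd. Finally, if the
closure were all of `T`, every vertex would have two neighbours, and in a tree one can then
extend a path from a fixed root forever, producing a ray inside the closure.
-/

lemma Set.eq_or_eq_of_encard_eq_two {α : Type*} {s : Set α} (hs : s.encard = 2) {x y z : α}
    (hx : x ∈ s) (hy : y ∈ s) (hz : z ∈ s) (hxy : x ≠ y) : z = x ∨ z = y := by
  obtain ⟨a, b, -, rfl⟩ := Set.encard_eq_two.mp hs
  simp only [Set.mem_insert_iff, Set.mem_singleton_iff] at hx hy hz
  grind

section

variable {V : Type*} {G : SimpleGraph V}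

lemma mem_treeClosure_iff {A : Set V} {v : V} :
    v ∈ treeClosure G A ↔
      ∃ a ∈ A, ∃ b ∈ A, ∃ p : G.Walk a b, p.IsPath ∧ v ∈ p.support := by
  refine ⟨?_, Or.inr⟩
  rintro (hv | hv)
  · exact ⟨v, hv, v, hv, .nil, .nil, by simp⟩
  · exact hv

lemma SimpleGraph.Walk.IsPath.one_lt_eDeg_getVert {u v : V} {p : G.Walk u v} (hp : p.IsPath)
    {i : ℕ} (hi : i + 2 ≤ p.length) : 1 < eDeg G (p.getVert (i + 1)) := by
  refine Set.one_lt_encard_iff.mpr ⟨p.getVert i, p.getVert (i + 2), ?_, ?_, fun h => ?_⟩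
  · exact (p.adj_getVert_succ (by omega)).symm
  · exact p.adj_getVert_succ (by omega)
  · have := hp.getVert_injOn (by simp; omega) (by simp; omega) h
    omega

lemma one_lt_eDeg_of_mem_treeClosure {A : Set V} (hA : ∀ a ∈ A, 1 < eDeg G a) {v : V}
    (hv : v ∈ treeClosure G A) : 1 < eDeg G v := by
  obtain ⟨a, ha, b, hb, p, hp, hv⟩ := mem_treeClosure_iff.mp hv
  obtain ⟨i, rfl, hi⟩ := Walk.mem_support_iff_exists_getVert.mp hv
  rcases i with _ | i
  · simpa using hA a ha
  rcases hi.lt_or_eq with hi | hi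
  · exact hp.one_lt_eDeg_getVert hi
  · simpa [hi] using hA b hb

lemma IsRay.shift {f : ℕ → V} (hf : IsRay G f) (M : ℕ) : IsRay G (fun n => f (M + n)) :=
  ⟨fun _ _ h => Nat.add_left_cancel (hf.1 h), fun n => hf.2 (M + n)⟩

lemma IsRay.eq_getVert_of_eDeg_eq_two {g : ℕ → V} (hg : IsRay G g)
    (hdeg : ∀ n, eDeg G (g n) = 2) {u v : V} {p : G.Walk u v} (hp : p.IsPath) {i : ℕ}
    (h0 : g 0 = p.getVert i) (h1 : g 1 = p.getVert (i + 1)) :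
    ∀ k, i + k ≤ p.length → g k = p.getVert (i + k) := by
  intro k
  induction k using Nat.twoStepInduction with
  | zero => exact fun _ => h0
  | one => exact fun _ => h1
  | more k ih₀ ih₁ =>
    intro hk
    have hk₀ := ih₀ (by omega)
    have hk₁ := ih₁ (by omega)
    -- the only two neighbours of `g (k + 1)` are `g k` and the next vertex of `p`
    have hnext : G.Adj (g (k + 1)) (p.getVert (i + (k + 2))) := by
      rw [hk₁]; exact p.adj_getVert_succ (by omega)
    have hne : g k ≠ p.getVert (i + (k + 2)) := fun h => by
      rw [hk₀] at h
      have := hp.getVert_injOn (by simp; omega) (by simp; omega) h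
      omega
    refine (Set.eq_or_eq_of_encard_eq_two (hdeg (k + 1)) (hg.2 k).symm hnext (hg.2 (k + 1))
      hne).resolve_left fun h => ?_
    have := hg.1 h
    omega

lemma IsRay.zero_notMem_treeClosure {A : Set V} (hA : ∀ a ∈ A, eDeg G a ≠ 2) {g : ℕ → V}
    (hg : IsRay G g) (hdeg : ∀ n, eDeg G (g n) = 2) : g 0 ∉ treeClosure G A := by
  intro h
  obtain ⟨a, ha, b, hb, p, hp, h⟩ := mem_treeClosure_iff.mp h
  obtain ⟨i, hi0, hi⟩ := Walk.mem_support_iff_exists_getVert.mp h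
  rcases i with _ | i
  · exact hA a ha (by simpa [← hi0] using hdeg 0)
  rcases hi.lt_or_eq with hi | hi
  swap
  · exact hA b hb (by simpa [hi, ← hi0] using hdeg 0)
  have hprev : G.Adj (g 0) (p.getVert i) := by
    rw [← hi0]; exact (p.adj_getVert_succ (by omega)).symm
  have hnext : G.Adj (g 0) (p.getVert (i + 2)) := by
    rw [← hi0]; exact p.adj_getVert_succ (by omega)
  have hne : p.getVert i ≠ p.getVert (i + 2) := fun h => by
    have := hp.getVert_injOn (by simp; omega) (by simp; omega) h
    omega
  -- `g` leaves `g 0` along `p`, and then has to follow `p` (or its reverse) up to an end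
  rcases Set.eq_or_eq_of_encard_eq_two (hdeg 0) hprev hnext (hg.2 0) hne with h1 | h1
  · have hreach := hg.eq_getVert_of_eDeg_eq_two hdeg hp.reverse (i := p.length - (i + 1))
      (by rw [Walk.getVert_reverse, ← hi0]; congr 1; omega)
      (by rw [Walk.getVert_reverse, h1]; congr 1; omega) (i + 1) (by simp; omega)
    rw [show p.length - (i + 1) + (i + 1) = p.reverse.length by simp; omega,
      Walk.getVert_length] at hreach
    exact hA a ha (hreach ▸ hdeg (i + 1))
  · have hreach := hg.eq_getVert_of_eDeg_eq_two hdeg hp hi0.symm h1 (p.length - (i + 1))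
      (by omega)
    rw [show i + 1 + (p.length - (i + 1)) = p.length by omega, Walk.getVert_length] at hreach
    exact hA b hb (hreach ▸ hdeg _)

lemma induce_treeClosure_connected (hG : G.Preconnected) {A : Set V}
    (hA : (treeClosure G A).Nonempty) : (G.induce (treeClosure G A)).Connected := by
  classical
  obtain ⟨u, hu⟩ := hA
  obtain ⟨a₀, ha₀, -⟩ := mem_treeClosure_iff.mp hu
  have hsupp : ∀ {a b : V} (p : G.Walk a b), a ∈ A → b ∈ A → p.IsPath →
      {x | x ∈ p.support} ⊆ treeClosure G A :=
    fun p ha hb hp _ hx => mem_treeClosure_iff.mpr ⟨_, ha, _, hb, p, hp, hx⟩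
  refine G.induce_connected_of_patches a₀ (Or.inl ha₀) fun hv => ?_
  obtain ⟨a, ha, b, hb, p, hp, hv⟩ := mem_treeClosure_iff.mp hv
  let w := (hG a₀ a).some.bypass.append p
  refine ⟨{x | x ∈ w.support}, fun x hx => ?_, w.start_mem_support,
    (Walk.mem_support_append_iff _ _).mpr (Or.inr hv),
    w.connected_induce_support.preconnected _ _⟩
  rcases (Walk.mem_support_append_iff _ _).mp hx with hx | hx
  · exact hsupp _ ha₀ ha (Walk.bypass_isPath _) hx
  · exact hsupp p ha hb hp hx

lemma SimpleGraph.IsAcyclic.exists_adj_notMem_support (hG : G.IsAcyclic) {r x : V}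
    {p : G.Walk r x} (hp : p.IsPath) (hx : (G.neighborSet x).Nontrivial) :
    ∃ y, G.Adj x y ∧ y ∉ p.support := by
  obtain ⟨y, hy, z, hz, hyz⟩ := hx
  by_contra! h
  exact hyz ((hG.eq_penultimate_of_adj_end hp hy (h y hy)).trans
    (hG.eq_penultimate_of_adj_end hp hz (h z hz)).symm)

lemma SimpleGraph.IsAcyclic.length_eq_of_path (hG : G.IsAcyclic) {r x y : V}
    (p : G.Path r x) (q : G.Path r y) (h : x = y) : p.1.length = q.1.length := by
  subst h
  rw [(hG.subsingleton_path r x).elim p q]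

lemma SimpleGraph.IsAcyclic.exists_isRay [Nonempty V] (hG : G.IsAcyclic)
    (hdeg : ∀ v, (G.neighborSet v).Nontrivial) : ∃ f : ℕ → V, IsRay G f := by
  obtain ⟨r⟩ := ‹Nonempty V›
  have extend : ∀ s : Σ x, G.Path r x, ∃ t : Σ x, G.Path r x,
      G.Adj s.1 t.1 ∧ t.2.1.length = s.2.1.length + 1 := by
    rintro ⟨x, p, hp⟩
    obtain ⟨y, hxy, hy⟩ := hG.exists_adj_notMem_support hp (hdeg x)
    exact ⟨⟨y, p.concat hxy, hp.concat hy hxy⟩, hxy, p.length_concat hxy⟩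
  choose next hadj hlen using extend
  let c (n : ℕ) := next^[n] ⟨r, Path.nil⟩
  have hc (n : ℕ) : c (n + 1) = next (c n) := Function.iterate_succ_apply' next n _
  have hlen_c (n : ℕ) : (c n).2.1.length = n := by
    induction n with
    | zero => rfl
    | succ n ih => rw [hc, hlen, ih]
  refine ⟨fun n => (c n).1, fun m n hmn => ?_, fun n => by simpa only [hc] using hadj (c n)⟩
  simpa only [hlen_c] using hG.length_eq_of_path (c m).2 (c n).2 hmn

end

theorem stmt13_general {V : Type*} (T : SimpleGraph V) (hT : T.IsTree)
    (hsmall : IsSmall T) :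
    (¬∃ f : ℕ → V, IsRay T f ∧ ∀ n, f n ∈ treeClosure T {v | eDeg T v = ⊤}) ∧
    (∀ v ∈ treeClosure T {v | eDeg T v = ⊤}, eDeg T v ≠ 1) ∧
    ((treeClosure T {v | eDeg T v = ⊤}).Nonempty →
      (T.induce (treeClosure T {v | eDeg T v = ⊤})).Connected) ∧
    treeClosure T {v | eDeg T v = ⊤} ≠ Set.univ := by
  have rayless :
      ¬∃ f : ℕ → V, IsRay T f ∧ ∀ n, f n ∈ treeClosure T {v | eDeg T v = ⊤} := by
    rintro ⟨f, hf, hfC⟩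
    obtain ⟨M, hM⟩ := hsmall f hf
    refine (hf.shift M).zero_notMem_treeClosure (fun a ha => ?_) (fun n => hM _ (by omega))
      (hfC M)
    simp [Set.mem_ofPred_eq.mp ha]
  have one_lt_eDeg : ∀ v ∈ treeClosure T {v | eDeg T v = ⊤}, 1 < eDeg T v :=
    fun v => one_lt_eDeg_of_mem_treeClosure fun a ha => by simp [Set.mem_ofPred_eq.mp ha]
  refine ⟨rayless, fun v hv => (one_lt_eDeg v hv).ne', induce_treeClosure_connected
    hT.connected.preconnected, fun hC => rayless ?_⟩
  have : Nonempty V := hT.connected.nonempty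
  obtain ⟨f, hf⟩ := hT.isAcyclic.exists_isRay fun v =>
    Set.one_lt_encard_iff_nontrivial.mp (one_lt_eDeg v (hC ▸ Set.mem_univ v))
  exact ⟨f, hf, fun n => hC ▸ Set.mem_univ _⟩

/-- For an infinite small tree `T`, the closure of the set of
infinite-degree vertices is a rayless subtree of `T` containing no leaf of `T`, hence
properly contained in `T`. -/
theorem stmt13 {V : Type*} [Infinite V] (T : SimpleGraph V) (hT : T.IsTree)
    (hsmall : IsSmall T) :
    (¬∃ f : ℕ → V, IsRay T f ∧ ∀ n, f n ∈ treeClosure T {v | eDeg T v = ⊤}) ∧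
    (∀ v ∈ treeClosure T {v | eDeg T v = ⊤}, eDeg T v ≠ 1) ∧
    ((treeClosure T {v | eDeg T v = ⊤}).Nonempty →
      (T.induce (treeClosure T {v | eDeg T v = ⊤})).Connected) ∧
    treeClosure T {v | eDeg T v = ⊤} ≠ Set.univ :=
  stmt13_general T hT hsmall
end

section
/- Let T be a tree, r a vertex of T, and v a child of r. Let S be a rooted tree mutually rooted-minor-equivalent to (T_v, v). Then the tree obtained from (T, r) by replacing every rooted subtree (T_w, w), w a child of r, that is mutually rooted-minor-equivalent to S with a copy of S, is mutually rooted-minor-equivalent to (T, r). -/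
open SimpleGraph

/-- `a` is the minimal vertex of `A` with respect to the tree order rooted at `s`. -/
def BranchMin {W : Type*} (S : SimpleGraph W) (s : W) (A : Set W) (a : W) : Prop :=
  a ∈ A ∧ ∀ x ∈ A, treeLE S s a x

/-- A rooted minor model: a minor model that is compatible with the tree orders,
comparing the minimal vertices of branch sets. -/
structure IsRootedModel {V W : Type*} (T : SimpleGraph V) (r : V)
    (S : SimpleGraph W) (s : W) (μ : V → Set W) : Prop where
  toIsModel : IsModel T S μ
  ord : ∀ v w a b, BranchMin S s (μ v) a → BranchMin S s (μ w) b →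
    (treeLE T r v w ↔ treeLE S s a b)

/-- `(T, r)` is a rooted minor of `(S, s)`. -/
def IsRootedMinorOf {V W : Type*} (T : SimpleGraph V) (r : V)
    (S : SimpleGraph W) (s : W) : Prop :=
  ∃ μ : V → Set W, IsRootedModel T r S s μ

/-- A rooted graph: a graph with a distinguished root vertex. -/
structure RootedGraph : Type 1 where
  V : Type
  G : SimpleGraph V
  root : V

/-- Mutual rooted-minor equivalence of rooted graphs. -/
def RootedMutualMinor (X Y : RootedGraph) : Prop :=
  IsRootedMinorOf X.G X.root Y.G Y.root ∧ IsRootedMinorOf Y.G Y.root X.G X.root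

/-- Rooted isomorphism. -/
def RootedIso (X Y : RootedGraph) : Prop :=
  ∃ φ : X.G ≃g Y.G, φ X.root = Y.root

/-- The full rooted subtree of `X` at a vertex `v`. -/
def subtreeAt (X : RootedGraph) (v : X.V) : RootedGraph where
  V := {w : X.V // treeLE X.G X.root v w}
  G := X.G.induce {w : X.V | treeLE X.G X.root v w}
  root := ⟨v, Or.inl rfl⟩

/-- The number of isomorphism classes of rooted trees mutually
rooted-minor-equivalent to `Z`. -/
noncomputable def numClasses (Z : RootedGraph) : Cardinal :=
  Cardinal.mk (Quot (fun a b : {Y : RootedGraph // Y.G.IsTree ∧ RootedMutualMinor Y Z} =>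
    RootedIso a.1 b.1))

/-- The rooted graph obtained from `X` by deleting every subtree hanging at a child `c`
of the root that is mutually rooted-minor-equivalent to `S`, and attaching in its stead
a fresh copy of `S` by an edge from the root of `X` to the root of the copy. -/
def replaceEquivSubtrees (X S : RootedGraph) : RootedGraph where
  V := {x : X.V // x = X.root ∨ ¬∃ c, X.G.Adj X.root c ∧
          RootedMutualMinor (subtreeAt X c) S ∧ treeLE X.G X.root c x} ⊕
       ({c : X.V // X.G.Adj X.root c ∧ RootedMutualMinor (subtreeAt X c) S} × S.V)
  G := { Adj := fun a b =>
           match a, b with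
           | .inl x, .inl y => X.G.Adj x.1 y.1
           | .inr ⟨i, x⟩, .inr ⟨j, y⟩ => i = j ∧ S.G.Adj x y
           | .inl x, .inr ⟨_, y⟩ => x.1 = X.root ∧ y = S.root
           | .inr ⟨_, y⟩, .inl x => x.1 = X.root ∧ y = S.root
         symm := by
           constructor
           rintro (x | ⟨i, x⟩) (y | ⟨j, y⟩) h
           · exact X.G.symm.symm _ _ h
           · exact h
           · exact h
           · exact ⟨h.1.symm, S.G.symm.symm _ _ h.2⟩
         loopless := by
           constructor
           rintro (x | ⟨i, x⟩) h <;> simp_all }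
  root := .inl ⟨X.root, Or.inl rfl⟩

attribute [reducible] replaceEquivSubtrees

attribute [reducible] subtreeAt

section Toolkit

open SimpleGraph Walk

attribute [local instance] Classical.propDecidable

variable {V : Type*} {G : SimpleGraph V}

/-- The unique path between two vertices of a tree. -/
noncomputable def SimpleGraph.IsTree.path (hG : G.IsTree) (a b : V) : G.Walk a b :=
  (hG.existsUnique_path a b).choose

lemma SimpleGraph.IsTree.path_isPath (hG : G.IsTree) (a b : V) : (hG.path a b).IsPath :=
  (hG.existsUnique_path a b).choose_spec.1

lemma SimpleGraph.IsTree.path_eq (hG : G.IsTree) {a b : V} (p : G.Walk a b) (hp : p.IsPath) :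
    p = hG.path a b :=
  (hG.existsUnique_path a b).choose_spec.2 p hp

lemma treeLE_iff (hG : G.IsTree) {r v w : V} :
    treeLE G r v w ↔ v ∈ (hG.path r w).support := by
  constructor
  · rintro (rfl | ⟨p, hp, hv⟩)
    · exact Walk.end_mem_support _
    · rwa [hG.path_eq p hp] at hv
  · intro h
    exact Or.inr ⟨_, hG.path_isPath r w, h⟩

lemma treeLE_refl (r v : V) : treeLE G r v v := Or.inl rfl

/-- `r ≤ x` always. -/
lemma treeLE_root (hG : G.IsTree) (r x : V) : treeLE G r r x := by
  rw [treeLE_iff hG]; exact Walk.start_mem_support _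

lemma path_self (hG : G.IsTree) (r : V) : hG.path r r = Walk.nil := by
  have := hG.path_isPath r r
  rwa [Walk.isPath_iff_eq_nil] at this

lemma treeLE_self_iff (hG : G.IsTree) {r v : V} : treeLE G r v r ↔ v = r := by
  rw [treeLE_iff hG, path_self hG]
  simp

/-- key splitting fact: on the path from `r` to `x`, if `w` comes at or before `u`,
then `w` is on the path from `r` to `u`. -/
lemma mem_path_of_mem_dropUntil (hG : G.IsTree) {r x u w : V}
    (hw : w ∈ (hG.path r x).support)
    (hu : u ∈ ((hG.path r x).dropUntil w hw).support) :
    w ∈ (hG.path r u).support := by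
  set p := hG.path r x with hp
  have hP : p.IsPath := hG.path_isPath r x
  set t := p.takeUntil w hw with ht
  set d := p.dropUntil w hw with hd
  set d' := d.takeUntil u hu with hd'
  have hsupp : t.support ++ d.support.tail = p.support := by
    have := congrArg Walk.support (p.take_spec hw)
    rwa [Walk.support_append] at this
  have hsupp2 : d'.support ++ (d.dropUntil u hu).support.tail = d.support := by
    have := congrArg Walk.support (d.take_spec hu)
    rwa [Walk.support_append] at this
  have htail : d'.support.tail ++ (d.dropUntil u hu).support.tail = d.support.tail := by
    have h1 : d'.support = w :: d'.support.tail := d'.support_eq_cons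
    have h2 : d.support = w :: d.support.tail := d.support_eq_cons
    have := hsupp2
    rw [h1, h2, List.cons_append] at this
    exact (List.cons.inj this).2
  have hnodup : (t.append d').support.Nodup := by
    rw [Walk.support_append]
    have hsub : List.Sublist (t.support ++ d'.support.tail) (t.support ++ d.support.tail) := by
      apply List.Sublist.append_left
      rw [← htail]
      exact List.sublist_append_left _ _
    exact List.Nodup.sublist hsub (by rw [hsupp]; exact hP.support_nodup)
  have hpath : (t.append d').IsPath := Walk.IsPath.mk' hnodup
  have hmem : w ∈ (t.append d').support := by
    rw [Walk.mem_support_append_iff]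
    exact Or.inl (Walk.end_mem_support t)
  rwa [hG.path_eq _ hpath] at hmem

/-- transitivity of the tree order. -/
lemma treeLE_trans (hG : G.IsTree) {r u v w : V}
    (h1 : treeLE G r u v) (h2 : treeLE G r v w) : treeLE G r u w := by
  rw [treeLE_iff hG] at *
  have hPv : (hG.path r w).takeUntil v h2 = hG.path r v :=
    hG.path_eq _ ((hG.path_isPath r w).takeUntil h2)
  rw [← hPv] at h1
  exact Walk.support_takeUntil_subset _ _ h1

/-- antisymmetry of the tree order. -/
lemma treeLE_antisymm (hG : G.IsTree) {r u v : V}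
    (h1 : treeLE G r u v) (h2 : treeLE G r v u) : u = v := by
  rw [treeLE_iff hG] at h1 h2
  have hPv : (hG.path r u).takeUntil v h2 = hG.path r v :=
    hG.path_eq _ ((hG.path_isPath r u).takeUntil h2)
  rw [← hPv] at h1
  set p := hG.path r u
  have hnodup : p.support.Nodup := (hG.path_isPath r u).support_nodup
  have hsupp : (p.takeUntil v h2).support ++ (p.dropUntil v h2).support.tail = p.support := by
    have := congrArg Walk.support (p.take_spec h2)
    rwa [Walk.support_append] at this
  rw [← hsupp, List.nodup_append] at hnodup
  have hu_end : u ∈ (p.dropUntil v h2).support := Walk.end_mem_support _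
  rw [(p.dropUntil v h2).support_eq_cons] at hu_end
  rcases List.mem_cons.mp hu_end with h | h
  · exact h
  · exact (hnodup.2.2 _ h1 _ h rfl).elim

/-- comparability of two vertices on a common path. -/
lemma treeLE_total_of_mem (hG : G.IsTree) {r x u w : V}
    (hu : u ∈ (hG.path r x).support) (hw : w ∈ (hG.path r x).support) :
    treeLE G r u w ∨ treeLE G r w u := by
  set p := hG.path r x
  rcases (Walk.mem_support_append_iff _ _).mp (by rw [p.take_spec hw]; exact hu) with h | h
  · left
    rw [treeLE_iff hG]
    have heq : (p.takeUntil w hw) = hG.path r w :=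
      hG.path_eq _ ((hG.path_isPath r x).takeUntil hw)
    exact heq ▸ h
  · right
    rw [treeLE_iff hG]
    exact mem_path_of_mem_dropUntil hG hw h

/-- every vertex on the path from the root is `≤` the endpoint. -/
lemma treeLE_of_mem_path (hG : G.IsTree) {r x u : V} (hu : u ∈ (hG.path r x).support) :
    treeLE G r u x := (treeLE_iff hG).mpr hu

end Toolkit
section Toolkit2

open SimpleGraph Walk

attribute [local instance] Classical.propDecidable

variable {V : Type*} {G : SimpleGraph V}

/-- For adjacent vertices, the root-paths extend one another. -/
lemma path_adj_dichotomy (hG : G.IsTree) {r u u' : V} (h : G.Adj u u') :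
    ((hG.path r u').support = (hG.path r u).support ++ [u'] ∧ u' ∉ (hG.path r u).support) ∨
    u' ∈ (hG.path r u).support := by
  by_cases hmem : u' ∈ (hG.path r u).support
  · exact Or.inr hmem
  · left
    refine ⟨?_, hmem⟩
    have hpath : ((hG.path r u).concat h).IsPath := by
      rw [Walk.isPath_def, Walk.support_concat, List.nodup_append]
      exact ⟨(hG.path_isPath r u).support_nodup, List.nodup_singleton _,
        by intro a ha b hb; rw [List.mem_singleton] at hb; subst hb; exact fun hab => hmem (hab ▸ ha)⟩
    have := hG.path_eq _ hpath
    rw [← this, Walk.support_concat]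

/-- If `u' ≤ u` and they are adjacent, the path to `u` is the path to `u'` plus the edge. -/
lemma path_adj_mem (hG : G.IsTree) {r u u' : V} (h : G.Adj u u')
    (hmem : u' ∈ (hG.path r u).support) :
    (hG.path r u).support = (hG.path r u').support ++ [u] := by
  have htake : (hG.path r u).takeUntil u' hmem = hG.path r u' :=
    hG.path_eq _ ((hG.path_isPath r u).takeUntil hmem)
  have hdrop : (hG.path r u).dropUntil u' hmem = Walk.cons h.symm Walk.nil := by
    have h1 : ((hG.path r u).dropUntil u' hmem).IsPath := (hG.path_isPath r u).dropUntil hmem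
    have h2 : (Walk.cons h.symm (Walk.nil : G.Walk u u)).IsPath := by
      rw [Walk.isPath_def]
      simp [h.ne']
    rw [hG.path_eq _ h1, hG.path_eq _ h2]
  have := congrArg Walk.support ((hG.path r u).take_spec hmem)
  rw [Walk.support_append, htake, hdrop] at this
  rw [← this]
  simp

/-- Existence of a branch minimum for a connected set in a tree. -/
lemma exists_branchMin (hG : G.IsTree) (r : V) {A : Set V}
    (hA : (G.induce A).Connected) : ∃ m, BranchMin G r A m := by
  have hne : A.Nonempty := by
    obtain ⟨⟨a, ha⟩⟩ := hA.nonempty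
    exact ⟨a, ha⟩
  -- choose m in A with minimal path length from r
  set L : Set ℕ := (fun a => (hG.path r a).length) '' A with hL
  have hLne : L.Nonempty := hne.image _
  obtain ⟨m, hmA, hmlen⟩ := Nat.sInf_mem hLne
  change (hG.path r m).length = sInf L at hmlen
  have hmin : ∀ x ∈ A, (hG.path r m).length ≤ (hG.path r x).length := by
    intro x hx
    rw [hmlen]
    exact Nat.sInf_le ⟨x, hx, rfl⟩
  refine ⟨m, hmA, ?_⟩
  -- step lemma
  have hstep : ∀ u u' : V, G.Adj u u' → u' ∈ A → m ∈ (hG.path r u).support →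
      m ∈ (hG.path r u').support := by
    intro u u' hadj hu' hm
    rcases path_adj_dichotomy hG (r := r) hadj with ⟨heq, _⟩ | hmem
    · rw [heq]
      exact List.mem_append_left _ hm
    · have heq := path_adj_mem hG hadj hmem
      rw [heq] at hm
      rcases List.mem_append.mp hm with h | h
      · exact h
      · -- m = u: contradiction with minimality via u'
        rw [List.mem_singleton] at h
        subst h
        exfalso
        have hlen : (hG.path r m).support.length = (hG.path r u').support.length + 1 := by
          rw [heq]; simp
        rw [Walk.length_support, Walk.length_support] at hlen
        have := hmin u' hu'
        omega
    -- walk induction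
  have hwalk : ∀ (p q : ↥A) (w : (G.induce A).Walk p q),
      m ∈ (hG.path r p.1).support → m ∈ (hG.path r q.1).support := by
    intro p q w
    induction w with
    | nil => exact id
    | cons hadj w ih =>
        intro hm
        exact ih (hstep _ _ hadj (Subtype.coe_prop _) hm)
  intro x hx
  rw [treeLE_iff hG]
  obtain ⟨w⟩ := hA.preconnected ⟨m, hmA⟩ ⟨x, hx⟩
  exact hwalk _ _ w (Walk.end_mem_support _)

/-- Lift a walk with support in `A` to the induced subgraph. -/
def liftWalk {A : Set V} : ∀ {a b : V} (w : G.Walk a b) (h : ∀ x ∈ w.support, x ∈ A),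
    (G.induce A).Walk ⟨a, h a w.start_mem_support⟩ ⟨b, h b w.end_mem_support⟩
  | _, _, Walk.nil, _ => Walk.nil
  | _, _, Walk.cons hadj w, h =>
      Walk.cons (by exact hadj)
        (liftWalk w fun x hx => h x (by rw [Walk.support_cons]; exact List.mem_cons_of_mem _ hx))

/-- The valuation homomorphism from an induced subgraph. -/
def valHom (G : SimpleGraph V) (A : Set V) : G.induce A →g G :=
  ⟨Subtype.val, fun h => h⟩

lemma map_liftWalk {A : Set V} {a b : V} (w : G.Walk a b) (h : ∀ x ∈ w.support, x ∈ A) :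
    (liftWalk w h).map (valHom G A) = w := by
  induction w with
  | nil => rfl
  | cons hadj w ih => exact congrArg (Walk.cons hadj) (ih _)

lemma support_liftWalk {A : Set V} {a b : V} (w : G.Walk a b) (h : ∀ x ∈ w.support, x ∈ A) :
    (((liftWalk w h).support.map Subtype.val)) = w.support := by
  have := congrArg Walk.support (map_liftWalk w h)
  rwa [Walk.support_map] at this

lemma liftWalk_isPath {A : Set V} {a b : V} {w : G.Walk a b} (hw : w.IsPath)
    (h : ∀ x ∈ w.support, x ∈ A) : (liftWalk w h).IsPath := by
  apply Walk.IsPath.of_map (f := valHom G A)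
  rw [map_liftWalk]
  exact hw

lemma mem_liftWalk {A : Set V} {a b : V} {w : G.Walk a b} (h : ∀ x ∈ w.support, x ∈ A)
    {u : ↥A} (hu : u.1 ∈ w.support) : u ∈ (liftWalk w h).support := by
  have := support_liftWalk w h
  rw [← this] at hu
  obtain ⟨z, hz, hzval⟩ := List.mem_map.mp hu
  have hzu : z = u := Subtype.ext hzval
  rwa [hzu] at hz

/-- Connectivity of a singleton induced subgraph. -/
lemma connected_induce_singleton (G : SimpleGraph V) (x : V) :
    (G.induce {x}).Connected := by
  haveI : Nonempty ↥({x} : Set V) := ⟨⟨x, rfl⟩⟩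
  refine ⟨fun a b => ?_⟩
  have : a = b := by
    ext
    rw [a.2, b.2]
  exact this ▸ Reachable.refl _

/-- Connectivity of induced subgraph on a union of connected sets joined by an edge
or a common point. -/
lemma connected_induce_union {A B : Set V} (hA : (G.induce A).Connected)
    (hB : (G.induce B).Connected)
    (hAB : ∃ a ∈ A, ∃ b ∈ B, a = b ∨ G.Adj a b) :
    (G.induce (A ∪ B)).Connected := by
  obtain ⟨za, hzA, zb, hzB, hz⟩ := hAB
  haveI : Nonempty ↥(A ∪ B) := ⟨⟨za, Or.inl hzA⟩⟩
  refine ⟨fun a b => ?_⟩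
  · have hzz : (G.induce (A ∪ B)).Reachable ⟨za, Or.inl hzA⟩ ⟨zb, Or.inr hzB⟩ := by
      rcases hz with h | h
      · subst h
        exact Reachable.refl _
      · exact SimpleGraph.Adj.reachable (by exact h)
    have key : ∀ c : ↥(A ∪ B), (G.induce (A ∪ B)).Reachable c ⟨za, Or.inl hzA⟩ := by
      rintro ⟨c, hc | hc⟩
      · have := hA.preconnected ⟨c, hc⟩ ⟨za, hzA⟩
        obtain ⟨w⟩ := this
        exact ⟨(w.map (G.induceHomOfLE Set.subset_union_left).toHom).copy rfl rfl⟩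
      · have := hB.preconnected ⟨c, hc⟩ ⟨zb, hzB⟩
        obtain ⟨w⟩ := this
        refine (Reachable.trans ?_ hzz.symm)
        exact ⟨(w.map (G.induceHomOfLE Set.subset_union_right).toHom).copy rfl rfl⟩
    exact (key a).trans (key b).symm

/-- The support of a walk induces a connected subgraph. -/
lemma connected_induce_support {a b : V} (w : G.Walk a b) :
    (G.induce {z | z ∈ w.support}).Connected := by
  induction w with
  | nil =>
      rename_i u
      have hset : {z | z ∈ (Walk.nil : G.Walk u u).support} = {u} := by
        ext z; simp
      rw [hset]
      exact connected_induce_singleton G u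
  | @cons u v b h w ih =>
      have hset : {z | z ∈ (Walk.cons h w).support} = {u} ∪ {z | z ∈ w.support} := by
        ext z
        simp [Walk.support_cons]
      rw [hset]
      exact connected_induce_union (connected_induce_singleton G u) ih
        ⟨u, rfl, v, w.start_mem_support, Or.inr h⟩

/-- Transfer of connectivity along an injective adjacency-preserving map. -/
lemma connected_induce_image {W : Type*} {H : SimpleGraph W} (f : V → W)
    (hf : Function.Injective f) {A : Set V}
    (hadj : ∀ a ∈ A, ∀ b ∈ A, (H.Adj (f a) (f b) ↔ G.Adj a b))
    (hA : (G.induce A).Connected) : (H.induce (f '' A)).Connected := by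
  have e : G.induce A ≃g H.induce (f '' A) := by
    refine ⟨Equiv.Set.image f A hf, ?_⟩
    intro a b
    simp only [Equiv.Set.image, Equiv.Set.imageOfInjOn]
    exact hadj a.1 a.2 b.1 b.2
  exact e.connected_iff.mp hA

end Toolkit2
section Toolkit3

open SimpleGraph Walk

attribute [local instance] Classical.propDecidable

variable {V : Type*} {G : SimpleGraph V}

lemma support_path_child (hG : G.IsTree) {r c : V} (hc : G.Adj r c) :
    (hG.path r c).support = [r, c] := by
  have hpath : (Walk.cons hc (Walk.nil : G.Walk c c)).IsPath := by
    rw [Walk.isPath_def]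
    simp [hc.ne]
  rw [← hG.path_eq _ hpath]
  simp

lemma treeLE_child_iff (hG : G.IsTree) {r c u : V} (hc : G.Adj r c) :
    treeLE G r u c ↔ u = r ∨ u = c := by
  rw [treeLE_iff hG, support_path_child hG hc]
  simp

lemma root_notin_subtree (hG : G.IsTree) {r c : V} (hc : G.Adj r c) :
    ¬ treeLE G r c r := by
  rw [treeLE_self_iff hG]
  exact hc.ne'

/-- The path from the child `c` to a vertex of the subtree at `c`. -/
noncomputable def subPath (hG : G.IsTree) {r c x : V} (hx : treeLE G r c x) : G.Walk c x :=
  (hG.path r x).dropUntil c ((treeLE_iff hG).mp hx)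

lemma subPath_isPath (hG : G.IsTree) {r c x : V} (hx : treeLE G r c x) :
    (subPath hG hx).IsPath := (hG.path_isPath r x).dropUntil _

lemma support_path_eq_cons_subPath (hG : G.IsTree) {r c x : V} (hc : G.Adj r c)
    (hx : treeLE G r c x) :
    (hG.path r x).support = r :: (subPath hG hx).support := by
  have hmem : c ∈ (hG.path r x).support := (treeLE_iff hG).mp hx
  have htake : (hG.path r x).takeUntil c hmem = hG.path r c :=
    hG.path_eq _ ((hG.path_isPath r x).takeUntil hmem)
  have := congrArg Walk.support ((hG.path r x).take_spec hmem)
  rw [Walk.support_append, htake, support_path_child hG hc] at this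
  rw [← this]
  have hd : (subPath hG hx).support = c :: (subPath hG hx).support.tail :=
    Walk.support_eq_cons _
  rw [hd]
  rfl

lemma mem_subtree_of_mem_subPath (hG : G.IsTree) {r c x u : V} (hx : treeLE G r c x)
    (hu : u ∈ (subPath hG hx).support) : treeLE G r c u := by
  rw [treeLE_iff hG]
  exact mem_path_of_mem_dropUntil hG _ hu

lemma treeLE_iff_mem_subPath (hG : G.IsTree) {r c x u : V} (hc : G.Adj r c)
    (hu : treeLE G r c u) (hx : treeLE G r c x) :
    treeLE G r u x ↔ u ∈ (subPath hG hx).support := by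
  constructor
  · intro h
    have := (treeLE_iff hG).mp h
    rw [support_path_eq_cons_subPath hG hc hx] at this
    rcases List.mem_cons.mp this with h' | h'
    · subst h'
      exact absurd hu (root_notin_subtree hG hc)
    · exact h'
  · intro h
    apply treeLE_of_mem_path hG
    rw [support_path_eq_cons_subPath hG hc hx]
    exact List.mem_cons_of_mem _ h

lemma treeLE_induce_iff (hG : G.IsTree) {r c : V} (hc : G.Adj r c)
    {u x : V} (hu : u ∈ {w | treeLE G r c w}) (hx : x ∈ {w | treeLE G r c w}) :
    treeLE (G.induce {w | treeLE G r c w}) ⟨c, treeLE_refl r c⟩ ⟨u, hu⟩ ⟨x, hx⟩ ↔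
      treeLE G r u x := by
  set D : Set V := {w | treeLE G r c w} with hD
  constructor
  · rintro (heq | ⟨p, hp, hmem⟩)
    · have hux : u = x := Subtype.mk_eq_mk.mp heq
      subst hux
      exact treeLE_refl r u
    · set q := p.map (valHom G D) with hq
      have hqpath : q.IsPath := Walk.map_isPath_of_injective Subtype.val_injective hp
      have hrq : r ∉ q.support := by
        intro hr
        rw [Walk.support_map] at hr
        obtain ⟨z, _, hz⟩ := List.mem_map.mp hr
        have hz' : z.1 = r := hz
        have hz2 : treeLE G r c z.1 := z.2
        rw [hz'] at hz2
        exact root_notin_subtree hG hc hz2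
      have hcons : (Walk.cons hc q).IsPath := hqpath.cons hrq
      have hmem' : u ∈ (Walk.cons hc q).support := by
        erw [Walk.support_cons]
        apply List.mem_cons_of_mem
        erw [hq, Walk.support_map]
        exact List.mem_map.mpr ⟨⟨u, hu⟩, hmem, rfl⟩
      rw [hG.path_eq _ hcons] at hmem'
      exact treeLE_of_mem_path hG hmem' 
  · intro h
    have hmem : u ∈ (subPath hG hx).support := (treeLE_iff_mem_subPath hG hc hu hx).mp h
    have hsub : ∀ z ∈ (subPath hG hx).support, z ∈ D :=
      fun z hz => mem_subtree_of_mem_subPath hG hx hz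
    exact Or.inr ⟨liftWalk (subPath hG hx) hsub, liftWalk_isPath (subPath_isPath hG hx) hsub,
      mem_liftWalk hsub hmem⟩

lemma branchMin_induce_iff (hG : G.IsTree) {r c : V} (hc : G.Adj r c)
    {A : Set ↥{w | treeLE G r c w}} {b : ↥{w | treeLE G r c w}} :
    BranchMin (G.induce {w | treeLE G r c w}) ⟨c, treeLE_refl r c⟩ A b ↔
      BranchMin G r (Subtype.val '' A) b.1 := by
  constructor
  · rintro ⟨hbA, hmin⟩
    refine ⟨⟨b, hbA, rfl⟩, ?_⟩
    rintro x ⟨z, hz, rfl⟩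
    exact (treeLE_induce_iff hG hc b.2 z.2).mp (by simpa using hmin z hz)
  · rintro ⟨⟨z, hz, hzb⟩, hmin⟩
    have hzb' : z = b := Subtype.ext hzb
    subst hzb'
    refine ⟨hz, fun x hx => ?_⟩
    exact (treeLE_induce_iff hG hc z.2 x.2).mpr (hmin x.1 ⟨x, hx, rfl⟩)

lemma subtree_disjoint (hG : G.IsTree) {r c c' x : V} (hc : G.Adj r c) (hc' : G.Adj r c')
    (hne : c ≠ c') (hx : treeLE G r c x) (hx' : treeLE G r c' x) : False := by
  rcases treeLE_total_of_mem hG ((treeLE_iff hG).mp hx) ((treeLE_iff hG).mp hx') with h | h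
  · rcases (treeLE_child_iff hG hc').mp h with h' | h'
    · exact hc.ne' h'
    · exact hne h'
  · rcases (treeLE_child_iff hG hc).mp h with h' | h'
    · exact hc'.ne' h'
    · exact hne h'.symm

lemma adj_subtree_boundary (hG : G.IsTree) {r c x y : V} (hc : G.Adj r c)
    (hx : treeLE G r c x) (hy : ¬ treeLE G r c y) (hadj : G.Adj x y) :
    y = r ∧ x = c := by
  rcases path_adj_dichotomy hG (r := r) hadj with ⟨heq, _⟩ | hmem
  · exfalso
    apply hy
    rw [treeLE_iff hG, heq]
    exact List.mem_append_left _ ((treeLE_iff hG).mp hx)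
  · have : y ∈ (hG.path r x).support := hmem
    rw [support_path_eq_cons_subPath hG hc hx] at this
    rcases List.mem_cons.mp this with h' | h'
    · subst h'
      refine ⟨rfl, ?_⟩
      have hadj' : G.Adj y x := hadj.symm
      have hcm : c ∈ (hG.path y x).support := (treeLE_iff hG).mp hx
      rw [support_path_child hG hadj'] at hcm
      rcases List.mem_cons.mp hcm with h | h
      · exact absurd h hc.ne'
      · rw [List.mem_singleton] at h
        exact h.symm
    · exact absurd (mem_subtree_of_mem_subPath hG hx h') hy

end Toolkit3
section Toolkit4

open SimpleGraph Walk

attribute [local instance] Classical.propDecidable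

variable (X S : RootedGraph)

/-- The type of children of the root whose subtrees are replaced. -/
abbrev EqChild := {c : X.V // X.G.Adj X.root c ∧ RootedMutualMinor (subtreeAt X c) S}

/-- The kept vertices. -/
abbrev KeptSub := {x : X.V // x = X.root ∨ ¬∃ c, X.G.Adj X.root c ∧
  RootedMutualMinor (subtreeAt X c) S ∧ treeLE X.G X.root c x}

noncomputable abbrev rootSub : KeptSub X S := ⟨X.root, Or.inl rfl⟩

variable {X S}

lemma R_adj_inl_inl {x y : KeptSub X S} :
    (replaceEquivSubtrees X S).G.Adj (Sum.inl x) (Sum.inl y) ↔ X.G.Adj x.1 y.1 := Iff.rfl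

lemma R_adj_inl_inr {x : KeptSub X S} {c : EqChild X S} {y : S.V} :
    (replaceEquivSubtrees X S).G.Adj (Sum.inl x) (Sum.inr (c, y)) ↔
      x.1 = X.root ∧ y = S.root := Iff.rfl

lemma R_adj_inr_inl {x : KeptSub X S} {c : EqChild X S} {y : S.V} :
    (replaceEquivSubtrees X S).G.Adj (Sum.inr (c, y)) (Sum.inl x) ↔
      x.1 = X.root ∧ y = S.root := Iff.rfl

lemma R_adj_inr_inr {c c' : EqChild X S} {y y' : S.V} :
    (replaceEquivSubtrees X S).G.Adj (Sum.inr (c, y)) (Sum.inr (c', y')) ↔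
      c = c' ∧ S.G.Adj y y' := Iff.rfl

lemma R_root_eq : (replaceEquivSubtrees X S).root = Sum.inl (rootSub X S) := rfl

lemma inl_eq_root_iff {x : KeptSub X S} :
    (Sum.inl x : (replaceEquivSubtrees X S).V) = Sum.inl (rootSub X S) ↔ x.1 = X.root := by
  constructor
  · intro h
    exact congrArg Subtype.val (Sum.inl.inj h)
  · intro h
    exact congrArg Sum.inl (Subtype.ext h)

/-- C1: any walk from a copy vertex to a kept vertex passes through the root. -/
lemma R_walk_inr_inl {a b : (replaceEquivSubtrees X S).V}
    (w : (replaceEquivSubtrees X S).G.Walk a b) :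
    ∀ (c : EqChild X S) (y : S.V) (t : KeptSub X S), a = Sum.inr (c, y) → b = Sum.inl t →
      Sum.inl (rootSub X S) ∈ w.support := by
  induction w with
  | nil =>
      rintro c y t rfl h
      exact absurd h (by simp)
  | @cons u v b h w ih =>
      rintro c y t rfl rfl
      rcases v with x1 | ⟨c1, y1⟩
      · have hx : x1.1 = X.root := (R_adj_inr_inl.mp h).1
        have : Sum.inl x1 = Sum.inl (rootSub X S) := (inl_eq_root_iff).mpr hx
        rw [Walk.support_cons]
        exact List.mem_cons_of_mem _ (this ▸ w.start_mem_support)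
      · rw [Walk.support_cons]
        exact List.mem_cons_of_mem _ (ih c1 y1 t rfl rfl)

/-- The copy embedding homomorphism. -/
def iotaHom (c : EqChild X S) : S.G →g (replaceEquivSubtrees X S).G :=
  ⟨fun y => Sum.inr (c, y), fun h => ⟨rfl, h⟩⟩

lemma iotaHom_injective (c : EqChild X S) : Function.Injective (iotaHom (X := X) c) :=
  fun a b h => by
    simpa using (Prod.mk.injEq _ _ _ _ ▸ Sum.inr.inj h).2

/-- C2: a walk inside the graph avoiding the root and starting in a copy stays in the copy. -/
lemma R_walk_inr {a b : (replaceEquivSubtrees X S).V}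
    (w : (replaceEquivSubtrees X S).G.Walk a b) :
    ∀ (c : EqChild X S) (y : S.V), a = Sum.inr (c, y) →
      Sum.inl (rootSub X S) ∉ w.support →
      ∃ (y' : S.V) (q : S.G.Walk y y'), b = Sum.inr (c, y') ∧
        w.support = q.support.map (fun z => Sum.inr (c, z)) := by
  induction w with
  | nil =>
      rintro c y rfl _
      exact ⟨y, Walk.nil, rfl, by simp⟩
  | @cons u v b h w ih =>
      rintro c y rfl hroot
      rcases v with x1 | ⟨c1, y1⟩
      · exfalso
        have hx : x1.1 = X.root := (R_adj_inr_inl.mp h).1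
        have : Sum.inl x1 = Sum.inl (rootSub X S) := (inl_eq_root_iff).mpr hx
        apply hroot
        rw [Walk.support_cons]
        exact List.mem_cons_of_mem _ (this ▸ w.start_mem_support)
      · obtain ⟨hc1, hadj⟩ := R_adj_inr_inr.mp h
        subst hc1
        have hroot' : Sum.inl (rootSub X S) ∉ w.support := by
          intro hmem
          exact hroot (by rw [Walk.support_cons]; exact List.mem_cons_of_mem _ hmem)
        obtain ⟨y', q, hb, hs⟩ := ih c y1 rfl hroot'
        exact ⟨y', Walk.cons hadj q, hb, by rw [Walk.support_cons, hs]; simp⟩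

end Toolkit4
section Toolkit5

open SimpleGraph Walk

attribute [local instance] Classical.propDecidable

variable {X S : RootedGraph}

/-- The kept-vertex predicate. -/
def KeptP (X S : RootedGraph) (x : X.V) : Prop :=
  x = X.root ∨ ¬∃ c, X.G.Adj X.root c ∧ RootedMutualMinor (subtreeAt X c) S ∧
    treeLE X.G X.root c x

lemma kept_downward (hX : X.G.IsTree) {z t : X.V} (ht : KeptP X S t)
    (hzt : treeLE X.G X.root z t) : KeptP X S z := by
  by_contra hz
  rw [KeptP, not_or, not_not] at hz
  obtain ⟨hzroot, c, hadj, hequiv, hcz⟩ := hz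
  rcases ht with rfl | ht
  · rw [treeLE_self_iff hX] at hzt
    exact hzroot hzt
  · exact ht ⟨c, hadj, hequiv, treeLE_trans hX hcz hzt⟩

/-- C3: a path between kept vertices which avoids the root except possibly at its start
stays among kept vertices and projects to a path in `X`. -/
lemma R_walk_inl_inl {a b : (replaceEquivSubtrees X S).V}
    (w : (replaceEquivSubtrees X S).G.Walk a b) :
    ∀ (hw : w.IsPath) (x t : KeptSub X S), a = Sum.inl x → b = Sum.inl t →
      (Sum.inl (rootSub X S) ∉ w.support ∨ a = Sum.inl (rootSub X S)) →
      ∃ q : X.G.Walk x.1 t.1, q.IsPath ∧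
        (∀ z : KeptSub X S, Sum.inl z ∈ w.support ↔ z.1 ∈ q.support) ∧
        (∀ (c : EqChild X S) (y : S.V), Sum.inr (c, y) ∉ w.support) := by
  induction w with
  | nil =>
      rintro _ x t rfl hb _
      have hxt : x = t := Sum.inl.inj hb
      subst hxt
      refine ⟨Walk.nil, Walk.IsPath.nil, fun z => ?_, by simp⟩
      simp only [Walk.support_nil, List.mem_singleton]
      constructor
      · intro h
        exact congrArg Subtype.val (Sum.inl.inj h)
      · intro h
        exact congrArg Sum.inl (Subtype.ext h)
  | @cons u v b h w ih =>
      rintro hw x t rfl rfl hroot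
      rcases v with x1 | ⟨c1, y1⟩
      · -- stays in the kept part
        have hadj : X.G.Adj x.1 x1.1 := R_adj_inl_inl.mp h
        have hw' : w.IsPath := hw.of_cons
        have hxnotin : Sum.inl x ∉ w.support := by
          have := hw
          rw [Walk.cons_isPath_iff] at this
          exact this.2
        have hroot' : Sum.inl (rootSub X S) ∉ w.support ∨
            (Sum.inl x1 : (replaceEquivSubtrees X S).V) = Sum.inl (rootSub X S) := by
          rcases hroot with hr | hr
          · exact Or.inl fun hmem =>
              hr (by rw [Walk.support_cons]; exact List.mem_cons_of_mem _ hmem)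
          · exact Or.inl (by rw [← hr]; exact hxnotin)
        obtain ⟨q1, hq1, hiff, hnor⟩ := ih hw' x1 t rfl rfl hroot'
        have hxq : x.1 ∉ q1.support := fun hmem => hxnotin ((hiff x).mpr hmem)
        refine ⟨Walk.cons hadj q1, hq1.cons hxq, fun z => ?_, fun c y => ?_⟩
        · rw [Walk.support_cons, Walk.support_cons, List.mem_cons, List.mem_cons]
          constructor
          · rintro (hz | hz)
            · exact Or.inl (congrArg Subtype.val (Sum.inl.inj hz))
            · exact Or.inr ((hiff z).mp hz)
          · rintro (hz | hz)
            · exact Or.inl (congrArg Sum.inl (Subtype.ext hz))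
            · exact Or.inr ((hiff z).mpr hz)
        · rw [Walk.support_cons, List.mem_cons]
          rintro (hz | hz)
          · exact absurd hz (by simp)
          · exact hnor c y hz
      · -- dips into a copy: impossible
        exfalso
        have hx : x.1 = X.root := (R_adj_inl_inr.mp h).1
        have hxr : Sum.inl x = Sum.inl (rootSub X S) := inl_eq_root_iff.mpr hx
        have hrmem : Sum.inl (rootSub X S) ∈ w.support :=
          R_walk_inr_inl w c1 y1 t rfl rfl
        rcases hroot with hr | hr
        · exact hr (by rw [Walk.support_cons]; exact List.mem_cons_of_mem _ hrmem)
        · have hnot : Sum.inl x ∉ w.support := by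
            have := hw
            rw [Walk.cons_isPath_iff] at this
            exact this.2
          rw [hr] at hnot
          exact hnot hrmem

end Toolkit5
section Toolkit6

open SimpleGraph Walk

attribute [local instance] Classical.propDecidable

variable {X S : RootedGraph}

/-- The homomorphism from the induced kept part into the replaced graph. -/
def inlHom (X S : RootedGraph) : (X.G.induce {x | KeptP X S x}) →g (replaceEquivSubtrees X S).G :=
  ⟨fun z => Sum.inl ⟨z.1, z.2⟩, fun h => h⟩

lemma inlHom_injective : Function.Injective (inlHom X S) := by
  intro a b h
  exact Subtype.ext (congrArg Subtype.val (Sum.inl.inj h))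

/-- L1 -/
lemma R_treeLE_inl_inl (hX : X.G.IsTree) {u t : KeptSub X S} :
    treeLE (replaceEquivSubtrees X S).G (Sum.inl (rootSub X S)) (Sum.inl u) (Sum.inl t) ↔
      treeLE X.G X.root u.1 t.1 := by
  constructor
  · rintro (heq | ⟨p, hp, hmem⟩)
    · have : u = t := Sum.inl.inj heq
      subst this
      exact treeLE_refl _ _
    · obtain ⟨q, hq, hiff, -⟩ := R_walk_inl_inl p hp (rootSub X S) t rfl rfl (Or.inr rfl)
      exact Or.inr ⟨q, hq, (hiff u).mp hmem⟩
  · intro h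
    have hmemP : u.1 ∈ (hX.path X.root t.1).support := (treeLE_iff hX).mp h
    have hk : ∀ z ∈ (hX.path X.root t.1).support, z ∈ {x | KeptP X S x} := by
      intro z hz
      exact kept_downward hX (show KeptP X S t.1 from t.2) (treeLE_of_mem_path hX hz)
    set w0 := liftWalk (hX.path X.root t.1) hk with hw0
    have e1 : (inlHom X S) ⟨X.root, hk _ (hX.path X.root t.1).start_mem_support⟩ =
        Sum.inl (rootSub X S) := congrArg Sum.inl (Subtype.ext rfl)
    have e2 : (inlHom X S) ⟨t.1, hk _ (hX.path X.root t.1).end_mem_support⟩ =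
        (Sum.inl t : (replaceEquivSubtrees X S).V) := congrArg Sum.inl (Subtype.ext rfl)
    refine Or.inr ⟨(w0.map (inlHom X S)).copy e1 e2, ?_, ?_⟩
    · rw [Walk.isPath_copy]
      exact Walk.map_isPath_of_injective inlHom_injective
        (liftWalk_isPath (hX.path_isPath _ _) hk)
    · rw [Walk.support_copy, Walk.support_map]
      refine List.mem_map.mpr ⟨⟨u.1, hk _ hmemP⟩, mem_liftWalk hk hmemP, ?_⟩
      exact congrArg Sum.inl (Subtype.ext rfl)

/-- decomposition of a path from the root into a copy. -/
lemma R_path_root_inr {c' : EqChild X S} {y' : S.V}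
    {p : (replaceEquivSubtrees X S).G.Walk (Sum.inl (rootSub X S)) (Sum.inr (c', y'))}
    (hp : p.IsPath) :
    ∃ q : S.G.Walk S.root y', q.IsPath ∧
      p.support = Sum.inl (rootSub X S) :: q.support.map (fun z => Sum.inr (c', z)) := by
  cases p with
  | cons h w =>
    rename_i v
    rcases v with x1 | ⟨c1, z⟩
    · exfalso
      have hrmem : Sum.inl (rootSub X S) ∈ w.support := by
        have := R_walk_inr_inl w.reverse c' y' x1 rfl rfl
        rwa [Walk.support_reverse, List.mem_reverse] at this
      have := hp
      rw [Walk.cons_isPath_iff] at this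
      exact this.2 hrmem
    · have hz : z = S.root := (R_adj_inl_inr.mp h).2
      subst hz
      have hroot' : Sum.inl (rootSub X S) ∉ w.support := by
        have := hp
        rw [Walk.cons_isPath_iff] at this
        exact this.2
      obtain ⟨y'', q, hb, hs⟩ := R_walk_inr w c1 S.root rfl hroot'
      have hc : c1 = c' ∧ y'' = y' := by
        have h1 := Sum.inr.inj hb.symm
        exact ⟨(Prod.mk.injEq _ _ _ _ ▸ h1).1, (Prod.mk.injEq _ _ _ _ ▸ h1).2⟩
      obtain ⟨rfl, rfl⟩ := hc
      refine ⟨q, ?_, by rw [Walk.support_cons, hs]⟩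
      have hnodup : w.support.Nodup := by
        have := hp
        rw [Walk.cons_isPath_iff] at this
        exact this.1.support_nodup
      rw [hs] at hnodup
      exact Walk.IsPath.mk' (hnodup.of_map _)

/-- construction of a path from the root into a copy. -/
lemma R_path_to_inr (c' : EqChild X S) {y' : S.V} (q : S.G.Walk S.root y') (hq : q.IsPath) :
    ∃ p : (replaceEquivSubtrees X S).G.Walk (Sum.inl (rootSub X S)) (Sum.inr (c', y')),
      p.IsPath ∧
      p.support = Sum.inl (rootSub X S) :: q.support.map (fun z => Sum.inr (c', z)) := by
  refine ⟨Walk.cons (R_adj_inl_inr.mpr ⟨rfl, rfl⟩) (q.map (iotaHom c')), ?_, ?_⟩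
  · erw [Walk.cons_isPath_iff]
    refine ⟨Walk.map_isPath_of_injective (iotaHom_injective c') hq, ?_⟩
    erw [Walk.support_map]
    intro hmem
    obtain ⟨z, _, hz⟩ := List.mem_map.mp hmem
    exact absurd hz (by simp [iotaHom])
  · erw [Walk.support_cons, Walk.support_map]
    rfl

/-- L2 -/
lemma R_treeLE_inl_inr (hS : S.G.IsTree) {u : KeptSub X S} {c' : EqChild X S} {y' : S.V} :
    treeLE (replaceEquivSubtrees X S).G (Sum.inl (rootSub X S)) (Sum.inl u) (Sum.inr (c', y')) ↔
      u = rootSub X S := by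
  constructor
  · rintro (heq | ⟨p, hp, hmem⟩)
    · exact absurd heq (by simp)
    · obtain ⟨q, -, hs⟩ := R_path_root_inr hp
      rw [hs] at hmem
      rcases List.mem_cons.mp hmem with h | h
      · exact Sum.inl.inj h
      · obtain ⟨z, -, hz⟩ := List.mem_map.mp h
        exact absurd hz (by simp)
  · rintro rfl
    obtain ⟨p, hp, hs⟩ := R_path_to_inr c' (hS.path S.root y') (hS.path_isPath _ _)
    exact Or.inr ⟨p, hp, by rw [hs]; exact List.mem_cons_self⟩

/-- L3 -/
lemma R_treeLE_inr_inl {t : KeptSub X S} {c : EqChild X S} {y : S.V} :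
    ¬ treeLE (replaceEquivSubtrees X S).G (Sum.inl (rootSub X S))
      (Sum.inr (c, y)) (Sum.inl t) := by
  rintro (heq | ⟨p, hp, hmem⟩)
  · exact absurd heq (by simp)
  · obtain ⟨-, -, -, hnoinr⟩ := R_walk_inl_inl p hp (rootSub X S) t rfl rfl (Or.inr rfl)
    exact hnoinr c y hmem

/-- L4 -/
lemma R_treeLE_inr_inr {c c' : EqChild X S} {y y' : S.V} :
    treeLE (replaceEquivSubtrees X S).G (Sum.inl (rootSub X S))
      (Sum.inr (c, y)) (Sum.inr (c', y')) ↔ c = c' ∧ treeLE S.G S.root y y' := by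
  constructor
  · rintro (heq | ⟨p, hp, hmem⟩)
    · have h1 := Sum.inr.inj heq
      exact ⟨(Prod.mk.injEq _ _ _ _ ▸ h1).1, Or.inl (Prod.mk.injEq _ _ _ _ ▸ h1).2⟩
    · obtain ⟨q, hq, hs⟩ := R_path_root_inr hp
      rw [hs] at hmem
      rcases List.mem_cons.mp hmem with h | h
      · exact absurd h (by simp)
      · obtain ⟨z, hzq, hz⟩ := List.mem_map.mp h
        have h1 := Sum.inr.inj hz
        have hcc : c' = c := (Prod.mk.injEq _ _ _ _ ▸ h1).1
        have hzy : z = y := (Prod.mk.injEq _ _ _ _ ▸ h1).2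
        subst hcc
        subst hzy
        exact ⟨rfl, Or.inr ⟨q, hq, hzq⟩⟩
  · rintro ⟨rfl, h | ⟨q, hq, hy⟩⟩
    · exact Or.inl (by rw [h])
    · obtain ⟨p, hp, hs⟩ := R_path_to_inr c q hq
      refine Or.inr ⟨p, hp, ?_⟩
      rw [hs]
      exact List.mem_cons_of_mem _ (List.mem_map.mpr ⟨y, hy, rfl⟩)

/-- L5: the root is least. -/
lemma R_treeLE_root (hX : X.G.IsTree) (hS : S.G.IsTree)
    (z : (replaceEquivSubtrees X S).V) :
    treeLE (replaceEquivSubtrees X S).G (Sum.inl (rootSub X S)) (Sum.inl (rootSub X S)) z := by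
  rcases z with t | ⟨c, y⟩
  · exact (R_treeLE_inl_inl hX).mpr (treeLE_root hX _ _)
  · exact (R_treeLE_inl_inr hS).mpr rfl

end Toolkit6
section Dir1

open SimpleGraph Walk

attribute [local instance] Classical.propDecidable

variable {X S : RootedGraph}

/-- The chosen model of `S` inside the subtree at an equivalent child. -/
noncomputable def nuMod (c : EqChild X S) : S.V → Set ((subtreeAt X c.1).V) :=
  c.2.2.2.choose

lemma nuMod_spec (c : EqChild X S) :
    IsRootedModel S.G S.root (subtreeAt X c.1).G (subtreeAt X c.1).root (nuMod c) :=
  c.2.2.2.choose_spec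

/-- Branch sets transported into `X`. -/
def Nset (c : EqChild X S) (y : S.V) : Set X.V := Subtype.val '' nuMod c y

lemma Nset_connected (c : EqChild X S) (y : S.V) : (X.G.induce (Nset c y)).Connected :=
  connected_induce_image Subtype.val Subtype.val_injective
    (fun _ _ _ _ => Iff.rfl) ((nuMod_spec c).toIsModel.connected y)

lemma Nset_nonempty (c : EqChild X S) (y : S.V) : (Nset c y).Nonempty :=
  ((nuMod_spec c).toIsModel.nonempty y).image _

lemma Nset_subset (c : EqChild X S) (y : S.V) :
    ∀ z ∈ Nset c y, treeLE X.G X.root c.1 z := by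
  rintro z ⟨z', _, rfl⟩
  exact z'.2

lemma Nset_disjoint (c : EqChild X S) {y y' : S.V} (h : y ≠ y') :
    Disjoint (Nset c y) (Nset c y') := by
  rw [Set.disjoint_left]
  rintro z ⟨z1, h1, rfl⟩ ⟨z2, h2, hz2⟩
  have : z2 = z1 := Subtype.ext hz2
  subst this
  exact Set.disjoint_left.mp ((nuMod_spec c).toIsModel.disjoint y y' h) h1 h2

variable (hX : X.G.IsTree) (hS : S.G.IsTree)

/-- The minimal vertex of the root branch set. -/
noncomputable def mC (c : EqChild X S) : X.V :=
  (exists_branchMin hX X.root (Nset_connected c S.root)).choose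

lemma mC_spec (c : EqChild X S) : BranchMin X.G X.root (Nset c S.root) (mC hX c) :=
  (exists_branchMin hX X.root (Nset_connected c S.root)).choose_spec

lemma mC_mem_D (c : EqChild X S) : treeLE X.G X.root c.1 (mC hX c) :=
  Nset_subset c S.root _ (mC_spec hX c).1

/-- The enlarged root branch set. -/
def Eset (c : EqChild X S) : Set X.V :=
  Nset c S.root ∪ {z | z ∈ (subPath hX (mC_mem_D hX c)).support}

lemma Eset_subset (c : EqChild X S) : ∀ z ∈ Eset hX c, treeLE X.G X.root c.1 z := by
  rintro z (hz | hz)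
  · exact Nset_subset c S.root z hz
  · exact mem_subtree_of_mem_subPath hX _ hz

lemma c_mem_Eset (c : EqChild X S) : c.1 ∈ Eset hX c :=
  Or.inr (Walk.start_mem_support _)

lemma Eset_connected (c : EqChild X S) : (X.G.induce (Eset hX c)).Connected :=
  connected_induce_union (Nset_connected c S.root)
    (_root_.connected_induce_support (subPath hX (mC_mem_D hX c)))
    ⟨mC hX c, (mC_spec hX c).1, mC hX c, Walk.end_mem_support _, Or.inl rfl⟩

/-- The branch sets for direction 1. -/
noncomputable def mu1 : (replaceEquivSubtrees X S).V → Set X.V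
  | Sum.inl x => {x.1}
  | Sum.inr (c, y) => if y = S.root then Eset hX c else Nset c y

lemma mu1_inr_subset (c : EqChild X S) (y : S.V) :
    ∀ z ∈ mu1 hX (Sum.inr (c, y)), treeLE X.G X.root c.1 z := by
  intro z hz
  by_cases hy : y = S.root
  · rw [mu1, if_pos hy] at hz
    exact Eset_subset hX c z hz
  · rw [mu1, if_neg hy] at hz
    exact Nset_subset c y z hz

lemma Nset_subset_mu1 (c : EqChild X S) (y : S.V) :
    Nset c y ⊆ mu1 hX (Sum.inr (c, y)) := by
  intro z hz
  by_cases hy : y = S.root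
  · rw [mu1, if_pos hy]
    exact Or.inl (hy ▸ hz)
  · rw [mu1, if_neg hy]
    exact hz

lemma kept_not_in_D (hX : X.G.IsTree) {x : KeptSub X S} {c : EqChild X S} :
    ¬ treeLE X.G X.root c.1 x.1 := by
  intro h
  rcases x.2 with hr | hn
  · rw [hr] at h
    exact root_notin_subtree hX c.2.1 h
  · exact hn ⟨c.1, c.2.1, c.2.2, h⟩

lemma sub_treeLE (hX : X.G.IsTree) (c : EqChild X S) {a b : (subtreeAt X c.1).V} :
    treeLE (subtreeAt X c.1).G (subtreeAt X c.1).root a b ↔ treeLE X.G X.root a.1 b.1 :=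
  treeLE_induce_iff hX c.2.1 a.2 b.2

lemma bm_N (hX : X.G.IsTree) (c : EqChild X S) (y : S.V) {b : X.V}
    (h : BranchMin X.G X.root (Nset c y) b) :
    ∃ hb : treeLE X.G X.root c.1 b,
      BranchMin (subtreeAt X c.1).G (subtreeAt X c.1).root (nuMod c y) ⟨b, hb⟩ := by
  refine ⟨Nset_subset c y b h.1, ?_⟩
  exact (branchMin_induce_iff hX c.2.1).mpr h

lemma bm_E (c : EqChild X S) {a : X.V} (h : BranchMin X.G X.root (Eset hX c) a) :
    a = c.1 :=
  treeLE_antisymm hX (h.2 c.1 (c_mem_Eset hX c)) (Eset_subset hX c a h.1)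

/-- The key contradiction: `S.root`'s branch set is strictly minimal. -/
lemma not_c_mem_N (hX : X.G.IsTree) (hS : S.G.IsTree) (c : EqChild X S) {y : S.V} (hy : y ≠ S.root)
    (hbm : BranchMin X.G X.root (Nset c y) c.1) : False := by
  obtain ⟨hb, hbm'⟩ := bm_N hX c y hbm
  obtain ⟨hb0, hbm0⟩ := bm_N hX c S.root (mC_spec hX c)
  have hord := ((nuMod_spec c).ord S.root y _ _ hbm0 hbm').mp (treeLE_root hS S.root y)
  have h1 : treeLE X.G X.root (mC hX c) c.1 := (sub_treeLE hX c).mp hord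
  rcases (treeLE_child_iff hX c.2.1).mp h1 with h | h
  · have hmm := mC_mem_D hX c
    rw [h] at hmm
    exact root_notin_subtree hX c.2.1 hmm
  · have hc1 : c.1 ∈ Nset c S.root := by rw [← h]; exact (mC_spec hX c).1
    exact Set.disjoint_left.mp (Nset_disjoint c (Ne.symm hy)) hc1 hbm.1

lemma Eset_Nset_disjoint (hS : S.G.IsTree) (c : EqChild X S) {y' : S.V} (hy' : y' ≠ S.root) :
    Disjoint (Eset hX c) (Nset c y') := by
  rw [Set.disjoint_left]
  rintro z (hz | hz) hz'
  · exact Set.disjoint_left.mp (Nset_disjoint c (Ne.symm hy')) hz hz'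
  · -- z is on the path from c to mC; get the minimum of Nset c y'
    obtain ⟨m', hm'⟩ := exists_branchMin hX X.root (Nset_connected c y')
    have hzD : treeLE X.G X.root c.1 z := mem_subtree_of_mem_subPath hX _ hz
    have hzm : treeLE X.G X.root z (mC hX c) :=
      (treeLE_iff_mem_subPath hX c.2.1 hzD (mC_mem_D hX c)).mpr hz
    have hm'z : treeLE X.G X.root m' z := hm'.2 z hz'
    obtain ⟨hb', hbm'⟩ := bm_N hX c y' hm'
    obtain ⟨hb0, hbm0⟩ := bm_N hX c S.root (mC_spec hX c)
    have hord := ((nuMod_spec c).ord S.root y' _ _ hbm0 hbm').mp (treeLE_root hS S.root y')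
    have h1 : treeLE X.G X.root (mC hX c) m' := (sub_treeLE hX c).mp hord
    have hmm : m' = mC hX c :=
      treeLE_antisymm hX (treeLE_trans hX hm'z hzm) h1
    have : mC hX c ∈ Nset c y' := hmm ▸ hm'.1
    exact Set.disjoint_left.mp (Nset_disjoint c (Ne.symm hy')) (mC_spec hX c).1 this

end Dir1
section Dir1Main

open SimpleGraph Walk

attribute [local instance] Classical.propDecidable

variable {X S : RootedGraph}

lemma dir1 (hX : X.G.IsTree) (hS : S.G.IsTree) :
    IsRootedMinorOf (replaceEquivSubtrees X S).G (replaceEquivSubtrees X S).root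
      X.G X.root := by
  refine ⟨mu1 hX, ⟨⟨?_, ?_, ?_, ?_⟩, ?_⟩⟩
  · -- nonempty
    rintro (x | ⟨c, y⟩)
    · exact ⟨x.1, rfl⟩
    · by_cases hy : y = S.root
      · rw [mu1, if_pos hy]
        exact ⟨c.1, c_mem_Eset hX c⟩
      · rw [mu1, if_neg hy]
        exact Nset_nonempty c y
  · -- connected
    rintro (x | ⟨c, y⟩)
    · exact connected_induce_singleton X.G x.1
    · by_cases hy : y = S.root
      · rw [mu1, if_pos hy]
        exact Eset_connected hX c
      · rw [mu1, if_neg hy]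
        exact Nset_connected c y
  · -- disjoint
    rintro (x | ⟨c, y⟩) (x' | ⟨c', y'⟩) hne
    · rw [mu1, mu1, Set.disjoint_singleton_left, Set.mem_singleton_iff]
      exact fun h => hne (congrArg Sum.inl (Subtype.ext h))
    · rw [mu1, Set.disjoint_singleton_left]
      exact fun h => kept_not_in_D hX (mu1_inr_subset hX c' y' x.1 h)
    · rw [mu1, Set.disjoint_singleton_right]
      exact fun h => kept_not_in_D hX (mu1_inr_subset hX c y x'.1 h)
    · by_cases hcc : c = c'
      · subst hcc
        have hyy : y ≠ y' := by
          intro h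
          exact hne (by rw [h])
        by_cases hy : y = S.root
        · subst hy
          rw [mu1, mu1, if_pos rfl, if_neg (Ne.symm hyy)]
          exact Eset_Nset_disjoint hX hS c (Ne.symm hyy)
        · by_cases hy' : y' = S.root
          · subst hy'
            rw [mu1, mu1, if_pos rfl, if_neg hy]
            exact (Eset_Nset_disjoint hX hS c hy).symm
          · rw [mu1, mu1, if_neg hy, if_neg hy']
            exact Nset_disjoint c hyy
      · have hcc' : c.1 ≠ c'.1 := fun h => hcc (Subtype.ext h)
        rw [Set.disjoint_left]
        intro z hz hz'
        exact subtree_disjoint hX c.2.1 c'.2.1 hcc' (mu1_inr_subset hX c y z hz)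
          (mu1_inr_subset hX c' y' z hz')
  · -- edge
    rintro (x | ⟨c, y⟩) (x' | ⟨c', y'⟩) hadj
    · exact ⟨x.1, rfl, x'.1, rfl, R_adj_inl_inl.mp hadj⟩
    · obtain ⟨hx1, hy'⟩ := R_adj_inl_inr.mp hadj
      subst hy'
      refine ⟨x.1, rfl, c'.1, ?_, ?_⟩
      · rw [mu1, if_pos rfl]
        exact c_mem_Eset hX c'
      · rw [hx1]
        exact c'.2.1
    · obtain ⟨hx1, hy⟩ := R_adj_inr_inl.mp hadj
      subst hy
      refine ⟨c.1, ?_, x'.1, rfl, ?_⟩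
      · rw [mu1, if_pos rfl]
        exact c_mem_Eset hX c
      · rw [hx1]
        exact (c.2.1).symm
    · obtain ⟨hcc, hadjS⟩ := R_adj_inr_inr.mp hadj
      subst hcc
      obtain ⟨a', ha', b', hb', hsub⟩ := (nuMod_spec c).toIsModel.edge y y' hadjS
      exact ⟨a'.1, Nset_subset_mu1 hX c y ⟨a', ha', rfl⟩,
        b'.1, Nset_subset_mu1 hX c y' ⟨b', hb', rfl⟩, hsub⟩
  · -- ord
    rintro (x | ⟨c, y⟩) (x' | ⟨c', y'⟩) a b ha hb
    · -- inl / inl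
      rw [mu1] at ha hb
      rw [Set.mem_singleton_iff.mp ha.1] at *
      rw [Set.mem_singleton_iff.mp hb.1] at *
      exact R_treeLE_inl_inl hX
    · -- inl / inr
      rw [mu1] at ha
      rw [Set.mem_singleton_iff.mp ha.1] at *
      have hbD : treeLE X.G X.root c'.1 b := mu1_inr_subset hX c' y' b hb.1
      rw [show (replaceEquivSubtrees X S).root = Sum.inl (rootSub X S) from rfl,
        R_treeLE_inl_inr hS]
      constructor
      · intro h
        have : x.1 = X.root := congrArg Subtype.val h
        rw [this]
        exact treeLE_root hX _ _
      · intro h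
        have hmem := (treeLE_iff hX).mp h
        rw [support_path_eq_cons_subPath hX c'.2.1 hbD] at hmem
        rcases List.mem_cons.mp hmem with h' | h'
        · exact Subtype.ext h'
        · exact absurd (mem_subtree_of_mem_subPath hX hbD h') (kept_not_in_D hX)
    · -- inr / inl
      rw [mu1] at hb
      rw [Set.mem_singleton_iff.mp hb.1] at *
      have haD : treeLE X.G X.root c.1 a := mu1_inr_subset hX c y a ha.1
      refine iff_of_false R_treeLE_inr_inl ?_
      intro h
      exact kept_not_in_D hX (treeLE_trans hX haD h)
    · -- inr / inr
      have haD : treeLE X.G X.root c.1 a := mu1_inr_subset hX c y a ha.1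
      have hbD : treeLE X.G X.root c'.1 b := mu1_inr_subset hX c' y' b hb.1
      by_cases hcc : c = c'
      · subst hcc
        rw [show (replaceEquivSubtrees X S).root = Sum.inl (rootSub X S) from rfl,
          R_treeLE_inr_inr]
        simp only [true_and, eq_self_iff_true]
        by_cases hy : y = S.root
        · subst hy
          rw [mu1, if_pos rfl] at ha
          have ha' : a = c.1 := bm_E hX c ha
          subst ha'
          by_cases hy' : y' = S.root
          · subst hy'
            rw [mu1, if_pos rfl] at hb
            have hb' : b = c.1 := bm_E hX c hb
            subst hb'
            exact iff_of_true (treeLE_root hS _ _) (treeLE_refl _ _)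
          · exact iff_of_true (treeLE_root hS _ _) hbD
        · rw [mu1, if_neg hy] at ha
          by_cases hy' : y' = S.root
          · subst hy'
            rw [mu1, if_pos rfl] at hb
            have hb' : b = c.1 := bm_E hX c hb
            subst hb'
            refine iff_of_false ?_ ?_
            · intro h
              exact hy (treeLE_antisymm hS h (treeLE_root hS _ _) : y = S.root)
            · intro h
              rcases (treeLE_child_iff hX c.2.1).mp h with h' | h'
              · have := haD
                rw [h'] at this
                exact root_notin_subtree hX c.2.1 this
              · rw [h'] at ha
                exact not_c_mem_N hX hS c hy ha
          · rw [mu1, if_neg hy'] at hb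
            obtain ⟨ha1, ham⟩ := bm_N hX c y ha
            obtain ⟨hb1, hbm⟩ := bm_N hX c y' hb
            rw [(nuMod_spec c).ord y y' _ _ ham hbm]
            exact sub_treeLE hX c
      · have hcc' : c.1 ≠ c'.1 := fun h => hcc (Subtype.ext h)
        refine iff_of_false ?_ ?_
        · intro h
          rw [show (replaceEquivSubtrees X S).root = Sum.inl (rootSub X S) from rfl,
            R_treeLE_inr_inr] at h
          exact hcc h.1
        · intro h
          exact subtree_disjoint hX c.2.1 c'.2.1 hcc' (treeLE_trans hX haD h) hbD

end Dir1Main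
section Dir2

open SimpleGraph Walk

attribute [local instance] Classical.propDecidable

variable {X S : RootedGraph}

/-- The chosen model of the subtree inside `S`. -/
noncomputable def rhoMod (c : EqChild X S) : (subtreeAt X c.1).V → Set S.V :=
  c.2.2.1.choose

lemma rhoMod_spec (c : EqChild X S) :
    IsRootedModel (subtreeAt X c.1).G (subtreeAt X c.1).root S.G S.root (rhoMod c) :=
  c.2.2.1.choose_spec

lemma not_kept {x : X.V} (h : ¬ KeptP X S x) :
    x ≠ X.root ∧ ∃ c, X.G.Adj X.root c ∧ RootedMutualMinor (subtreeAt X c) S ∧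
      treeLE X.G X.root c x := by
  rw [KeptP, not_or, not_not] at h
  exact h

/-- The unique equivalent child whose subtree contains `x`. -/
noncomputable def theChild {x : X.V} (h : ¬ KeptP X S x) : EqChild X S :=
  ⟨(not_kept h).2.choose, (not_kept h).2.choose_spec.1, (not_kept h).2.choose_spec.2.1⟩

lemma theChild_le {x : X.V} (h : ¬ KeptP X S x) :
    treeLE X.G X.root (theChild h).1 x :=
  (not_kept h).2.choose_spec.2.2

lemma theChild_eq (hX : X.G.IsTree) {x : X.V} (h : ¬ KeptP X S x) (c : EqChild X S)
    (hc : treeLE X.G X.root c.1 x) : theChild h = c := by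
  apply Subtype.ext
  by_contra hne
  exact subtree_disjoint hX (theChild h).2.1 c.2.1 hne (theChild_le h) hc

lemma root_kept : KeptP X S X.root := Or.inl rfl

variable (hS : S.G.IsTree)

/-- The minimal vertex of the root branch set of `ρ`. -/
noncomputable def mS (c : EqChild X S) : S.V :=
  (exists_branchMin hS S.root ((rhoMod_spec c).toIsModel.connected (subtreeAt X c.1).root)).choose

lemma mS_spec (c : EqChild X S) :
    BranchMin S.G S.root (rhoMod c (subtreeAt X c.1).root) (mS hS c) :=
  (exists_branchMin hS S.root ((rhoMod_spec c).toIsModel.connected (subtreeAt X c.1).root)).choose_spec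

/-- The enlarged root branch set in `S`. -/
def E'set (c : EqChild X S) : Set S.V :=
  rhoMod c (subtreeAt X c.1).root ∪ {z | z ∈ (hS.path S.root (mS hS c)).support}

lemma Sroot_mem_E' (c : EqChild X S) : S.root ∈ E'set hS c :=
  Or.inr (Walk.start_mem_support _)

lemma E'_connected (c : EqChild X S) : (S.G.induce (E'set hS c)).Connected :=
  connected_induce_union ((rhoMod_spec c).toIsModel.connected _)
    (_root_.connected_induce_support (hS.path S.root (mS hS c)))
    ⟨mS hS c, (mS_spec hS c).1, mS hS c, Walk.end_mem_support _, Or.inl rfl⟩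

/-- The inner branch set attached at a subtree vertex. -/
noncomputable def BsetAt (c : EqChild X S) (u : (subtreeAt X c.1).V) : Set S.V :=
  if u = (subtreeAt X c.1).root then E'set hS c else rhoMod c u

lemma rho_sub_BsetAt (c : EqChild X S) (u : (subtreeAt X c.1).V) :
    rhoMod c u ⊆ BsetAt hS c u := by
  rw [BsetAt]
  by_cases hu : u = (subtreeAt X c.1).root
  · rw [if_pos hu, hu]
    exact Set.subset_union_left
  · rw [if_neg hu]

lemma BsetAt_nonempty (c : EqChild X S) (u : (subtreeAt X c.1).V) :
    (BsetAt hS c u).Nonempty :=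
  ((rhoMod_spec c).toIsModel.nonempty u).mono (rho_sub_BsetAt hS c u)

lemma BsetAt_connected (c : EqChild X S) (u : (subtreeAt X c.1).V) :
    (S.G.induce (BsetAt hS c u)).Connected := by
  rw [BsetAt]
  by_cases hu : u = (subtreeAt X c.1).root
  · rw [if_pos hu]
    exact E'_connected hS c
  · rw [if_neg hu]
    exact (rhoMod_spec c).toIsModel.connected u

/-- The branch sets for direction 2. -/
noncomputable def mu2 : X.V → Set (replaceEquivSubtrees X S).V := fun x =>
  {z | (∃ h : KeptP X S x, z = Sum.inl ⟨x, h⟩) ∨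
       (¬ KeptP X S x ∧ ∃ (c : EqChild X S) (hc : treeLE X.G X.root c.1 x),
         ∃ u ∈ BsetAt hS c ⟨x, hc⟩, z = Sum.inr (c, u))}

lemma child_eq (hX : X.G.IsTree) {x : X.V} (c c₂ : EqChild X S)
    (hc : treeLE X.G X.root c.1 x) (hc₂ : treeLE X.G X.root c₂.1 x) : c = c₂ := by
  apply Subtype.ext
  by_contra hne
  exact subtree_disjoint hX c.2.1 c₂.2.1 hne hc hc₂

lemma mu2_kept {x : X.V} (h : KeptP X S x) : mu2 hS x = {Sum.inl ⟨x, h⟩} := by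
  ext z
  constructor
  · rintro (⟨h', rfl⟩ | ⟨hn, _⟩)
    · rfl
    · exact absurd h hn
  · rintro rfl
    exact Or.inl ⟨h, rfl⟩

lemma mu2_unkept (hX : X.G.IsTree) {x : X.V} (h : ¬ KeptP X S x) (c : EqChild X S)
    (hc : treeLE X.G X.root c.1 x) :
    mu2 hS x = (fun u => (Sum.inr (c, u) : (replaceEquivSubtrees X S).V)) ''
      BsetAt hS c ⟨x, hc⟩ := by
  ext z
  constructor
  · rintro (⟨h', _⟩ | ⟨-, c₂, hc₂, u, hu, rfl⟩)
    · exact absurd h' h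
    · have hcc : c₂ = c := child_eq hX c₂ c hc₂ hc
      subst hcc
      exact ⟨u, hu, rfl⟩
  · rintro ⟨u, hu, rfl⟩
    exact Or.inr ⟨h, c, hc, u, hu, rfl⟩

lemma E'_rho_disjoint (hX : X.G.IsTree) (c : EqChild X S) {u : (subtreeAt X c.1).V}
    (hu : u ≠ (subtreeAt X c.1).root) :
    Disjoint (E'set hS c) (rhoMod c u) := by
  rw [Set.disjoint_left]
  rintro z (hz | hz) hz'
  · exact Set.disjoint_left.mp
      ((rhoMod_spec c).toIsModel.disjoint _ u (fun heq => hu heq.symm)) hz hz'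
  · obtain ⟨m'', hm''⟩ := exists_branchMin hS S.root ((rhoMod_spec c).toIsModel.connected u)
    have hzm : treeLE S.G S.root z (mS hS c) := treeLE_of_mem_path hS hz
    have hm''z : treeLE S.G S.root m'' z := hm''.2 z hz'
    have hroot_le : treeLE (subtreeAt X c.1).G (subtreeAt X c.1).root
        (subtreeAt X c.1).root u := (sub_treeLE hX c).mpr u.2
    have h1 : treeLE S.G S.root (mS hS c) m'' :=
      ((rhoMod_spec c).ord _ u _ _ (mS_spec hS c) hm'').mp hroot_le
    have hmm : m'' = mS hS c :=
      treeLE_antisymm hS (treeLE_trans hS hm''z hzm) h1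
    have : mS hS c ∈ rhoMod c u := hmm ▸ hm''.1
    exact Set.disjoint_left.mp
      ((rhoMod_spec c).toIsModel.disjoint _ u (fun heq => hu heq.symm)) (mS_spec hS c).1 this

lemma not_Sroot_min_rho (hX : X.G.IsTree) (hS : S.G.IsTree) (c : EqChild X S) {u : (subtreeAt X c.1).V}
    (hu : u ≠ (subtreeAt X c.1).root)
    (h : BranchMin S.G S.root (rhoMod c u) S.root) : False := by
  have hroot_le : treeLE (subtreeAt X c.1).G (subtreeAt X c.1).root
      (subtreeAt X c.1).root u := (sub_treeLE hX c).mpr u.2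
  have h1 : treeLE S.G S.root (mS hS c) S.root :=
    ((rhoMod_spec c).ord _ u _ _ (mS_spec hS c) h).mp hroot_le
  have h2 : mS hS c = S.root := (treeLE_self_iff hS).mp h1
  have : S.root ∈ rhoMod c (subtreeAt X c.1).root := h2 ▸ (mS_spec hS c).1
  exact Set.disjoint_left.mp
    ((rhoMod_spec c).toIsModel.disjoint _ u (fun heq => hu heq.symm)) this h.1

/-- Identify branch minima of image sets in the replaced graph. -/
lemma bmR (c : EqChild X S) {B : Set S.V} {b : (replaceEquivSubtrees X S).V}
    (h : BranchMin (replaceEquivSubtrees X S).G (replaceEquivSubtrees X S).root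
      ((fun z => (Sum.inr (c, z) : (replaceEquivSubtrees X S).V)) '' B) b) :
    ∃ u ∈ B, b = Sum.inr (c, u) ∧ BranchMin S.G S.root B u := by
  obtain ⟨u, hu, hb⟩ := h.1
  refine ⟨u, hu, hb.symm, hu, fun z hz => ?_⟩
  have := h.2 _ (Set.mem_image_of_mem _ hz)
  rw [← hb] at this
  exact (R_treeLE_inr_inr.mp this).2

lemma bm_imageE' (c : EqChild X S) {b : (replaceEquivSubtrees X S).V}
    (h : BranchMin (replaceEquivSubtrees X S).G (replaceEquivSubtrees X S).root
      ((fun z => (Sum.inr (c, z) : (replaceEquivSubtrees X S).V)) '' E'set hS c) b) :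
    b = Sum.inr (c, S.root) := by
  obtain ⟨u, _, rfl, hmin⟩ := bmR c h
  have : u = S.root := (treeLE_self_iff hS).mp (hmin.2 S.root (Sroot_mem_E' hS c))
  rw [this]

lemma BsetAt_disjoint (hX : X.G.IsTree) (c : EqChild X S)
    {u u' : (subtreeAt X c.1).V} (hne : u ≠ u') :
    Disjoint (BsetAt hS c u) (BsetAt hS c u') := by
  rw [BsetAt, BsetAt]
  by_cases hu : u = (subtreeAt X c.1).root
  · by_cases hu' : u' = (subtreeAt X c.1).root
    · exact absurd (hu.trans hu'.symm) hne
    · rw [if_pos hu, if_neg hu']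
      exact E'_rho_disjoint hS hX c hu'
  · by_cases hu' : u' = (subtreeAt X c.1).root
    · rw [if_neg hu, if_pos hu']
      exact (E'_rho_disjoint hS hX c hu).symm
    · rw [if_neg hu, if_neg hu']
      exact (rhoMod_spec c).toIsModel.disjoint u u' hne

end Dir2
section Dir2Main

open SimpleGraph Walk

attribute [local instance] Classical.propDecidable

variable {X S : RootedGraph}

lemma dir2 (hX : X.G.IsTree) (hS : S.G.IsTree) :
    IsRootedMinorOf X.G X.root (replaceEquivSubtrees X S).G
      (replaceEquivSubtrees X S).root := by
  refine ⟨mu2 hS, ⟨⟨?_, ?_, ?_, ?_⟩, ?_⟩⟩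
  · -- nonempty
    intro x
    by_cases hk : KeptP X S x
    · rw [mu2_kept hS hk]
      exact ⟨_, rfl⟩
    · rw [mu2_unkept hS hX hk (theChild hk) (theChild_le hk)]
      exact (BsetAt_nonempty hS _ _).image _
  · -- connected
    intro x
    by_cases hk : KeptP X S x
    · rw [mu2_kept hS hk]
      exact connected_induce_singleton _ _
    · rw [mu2_unkept hS hX hk (theChild hk) (theChild_le hk)]
      exact connected_induce_image _ (iotaHom_injective (theChild hk))
        (fun a _ b _ => ⟨fun h => (R_adj_inr_inr.mp h).2, fun h => R_adj_inr_inr.mpr ⟨rfl, h⟩⟩) (BsetAt_connected hS _ _)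
  · -- disjoint
    intro x x' hne
    by_cases hk : KeptP X S x <;> by_cases hk' : KeptP X S x'
    · rw [mu2_kept hS hk, mu2_kept hS hk', Set.disjoint_singleton_left,
        Set.mem_singleton_iff]
      intro heq
      exact hne (congrArg Subtype.val (Sum.inl.inj heq))
    · rw [mu2_kept hS hk, mu2_unkept hS hX hk' (theChild hk') (theChild_le hk'),
        Set.disjoint_singleton_left]
      rintro ⟨u, -, heq⟩
      exact absurd heq (by simp)
    · rw [mu2_kept hS hk', mu2_unkept hS hX hk (theChild hk) (theChild_le hk),
        Set.disjoint_singleton_right]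
      rintro ⟨u, -, heq⟩
      exact absurd heq (by simp)
    · by_cases hle' : treeLE X.G X.root (theChild hk).1 x'
      · rw [mu2_unkept hS hX hk (theChild hk) (theChild_le hk),
          mu2_unkept hS hX hk' (theChild hk) hle']
        rw [Set.disjoint_left]
        rintro z ⟨u, hu, rfl⟩ ⟨u', hu', heq⟩
        have huu : u' = u := by
          have := Sum.inr.inj heq
          exact (Prod.mk.injEq _ _ _ _ ▸ this).2
        subst huu
        have hxu : (⟨x, theChild_le hk⟩ : (subtreeAt X (theChild hk).1).V) ≠ ⟨x', hle'⟩ :=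
          fun h => hne (congrArg Subtype.val h)
        exact Set.disjoint_left.mp (BsetAt_disjoint hS hX (theChild hk) hxu) hu hu'
      · have hcc : theChild hk ≠ theChild hk' := by
          intro h
          apply hle'
          rw [h]
          exact theChild_le hk'
        rw [mu2_unkept hS hX hk (theChild hk) (theChild_le hk),
          mu2_unkept hS hX hk' (theChild hk') (theChild_le hk')]
        rw [Set.disjoint_left]
        rintro z ⟨u, hu, rfl⟩ ⟨u', hu', heq⟩
        have := Sum.inr.inj heq
        exact hcc ((Prod.mk.injEq _ _ _ _ ▸ this).1).symm
  · -- edge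
    intro x x' hadj
    by_cases hk : KeptP X S x <;> by_cases hk' : KeptP X S x'
    · exact ⟨Sum.inl ⟨x, hk⟩, by rw [mu2_kept hS hk]; rfl,
        Sum.inl ⟨x', hk'⟩, by rw [mu2_kept hS hk']; rfl, R_adj_inl_inl.mpr hadj⟩
    · obtain ⟨hxr, hxc⟩ := adj_subtree_boundary hX (theChild hk').2.1
        (theChild_le hk') (kept_not_in_D hX (x := ⟨x, hk⟩)) hadj.symm
      refine ⟨Sum.inl ⟨x, hk⟩, by rw [mu2_kept hS hk]; rfl,
        Sum.inr (theChild hk', S.root), ?_, R_adj_inl_inr.mpr ⟨hxr, rfl⟩⟩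
      rw [mu2_unkept hS hX hk' (theChild hk') (theChild_le hk')]
      refine ⟨S.root, ?_, rfl⟩
      rw [BsetAt, if_pos (Subtype.ext hxc)]
      exact Sroot_mem_E' hS _
    · obtain ⟨hxr, hxc⟩ := adj_subtree_boundary hX (theChild hk).2.1
        (theChild_le hk) (kept_not_in_D hX (x := ⟨x', hk'⟩)) hadj
      refine ⟨Sum.inr (theChild hk, S.root), ?_,
        Sum.inl ⟨x', hk'⟩, by rw [mu2_kept hS hk']; rfl, R_adj_inr_inl.mpr ⟨hxr, rfl⟩⟩
      rw [mu2_unkept hS hX hk (theChild hk) (theChild_le hk)]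
      refine ⟨S.root, ?_, rfl⟩
      rw [BsetAt, if_pos (Subtype.ext hxc)]
      exact Sroot_mem_E' hS _
    · have hle' : treeLE X.G X.root (theChild hk).1 x' := by
        by_contra hno
        obtain ⟨hxr, -⟩ := adj_subtree_boundary hX (theChild hk).2.1
          (theChild_le hk) hno hadj
        rw [hxr] at hk'
        exact hk' root_kept
      obtain ⟨u, hu, u', hu', hSadj⟩ := (rhoMod_spec (theChild hk)).toIsModel.edge
        ⟨x, theChild_le hk⟩ ⟨x', hle'⟩ hadj
      refine ⟨Sum.inr (theChild hk, u), ?_, Sum.inr (theChild hk, u'), ?_,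
        R_adj_inr_inr.mpr ⟨rfl, hSadj⟩⟩
      · rw [mu2_unkept hS hX hk (theChild hk) (theChild_le hk)]
        exact ⟨u, rho_sub_BsetAt hS _ _ hu, rfl⟩
      · rw [mu2_unkept hS hX hk' (theChild hk) hle']
        exact ⟨u', rho_sub_BsetAt hS _ _ hu', rfl⟩
  · -- ord
    intro x x' a b ha hb
    by_cases hk : KeptP X S x <;> by_cases hk' : KeptP X S x'
    · rw [mu2_kept hS hk] at ha
      rw [mu2_kept hS hk'] at hb
      rw [Set.eq_of_mem_singleton ha.1, Set.eq_of_mem_singleton hb.1,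
        show (replaceEquivSubtrees X S).root = Sum.inl (rootSub X S) from rfl]
      exact (R_treeLE_inl_inl (u := ⟨x, hk⟩) (t := ⟨x', hk'⟩) hX).symm
    · rw [mu2_kept hS hk] at ha
      rw [mu2_unkept hS hX hk' (theChild hk') (theChild_le hk')] at hb
      rw [Set.eq_of_mem_singleton ha.1]
      obtain ⟨u, huB, rfl, hmin⟩ := bmR (theChild hk') hb
      rw [show (replaceEquivSubtrees X S).root = Sum.inl (rootSub X S) from rfl,
        R_treeLE_inl_inr hS]
      constructor
      · intro h
        have hmem := (treeLE_iff hX).mp h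
        rw [support_path_eq_cons_subPath hX (theChild hk').2.1 (theChild_le hk')] at hmem
        rcases List.mem_cons.mp hmem with h' | h'
        · exact Subtype.ext h'
        · exact absurd (mem_subtree_of_mem_subPath hX (theChild_le hk') h')
            (kept_not_in_D hX (x := ⟨x, hk⟩))
      · intro h
        have : x = X.root := congrArg Subtype.val h
        rw [this]
        exact treeLE_root hX _ _
    · rw [mu2_kept hS hk'] at hb
      rw [mu2_unkept hS hX hk (theChild hk) (theChild_le hk)] at ha
      rw [Set.eq_of_mem_singleton hb.1]
      obtain ⟨u, huB, rfl⟩ := ha.1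
      refine iff_of_false ?_ R_treeLE_inr_inl
      intro h
      exact kept_not_in_D hX (x := ⟨x', hk'⟩) (treeLE_trans hX (theChild_le hk) h)
    · by_cases hle' : treeLE X.G X.root (theChild hk).1 x'
      · rw [mu2_unkept hS hX hk (theChild hk) (theChild_le hk)] at ha
        rw [mu2_unkept hS hX hk' (theChild hk) hle'] at hb
        set c := theChild hk with hcdef
        by_cases hx : x = c.1
        · have hxroot : (⟨x, theChild_le hk⟩ : (subtreeAt X c.1).V) =
              (subtreeAt X c.1).root := Subtype.ext hx
          rw [BsetAt, if_pos hxroot] at ha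
          have haE : a = Sum.inr (c, S.root) := bm_imageE' hS c ha
          subst haE
          by_cases hx' : x' = c.1
          · have hxroot' : (⟨x', hle'⟩ : (subtreeAt X c.1).V) =
                (subtreeAt X c.1).root := Subtype.ext hx'
            rw [BsetAt, if_pos hxroot'] at hb
            have hbE : b = Sum.inr (c, S.root) := bm_imageE' hS c hb
            subst hbE
            exact iff_of_true (by rw [hx, hx']; exact treeLE_refl _ _)
              (R_treeLE_inr_inr.mpr ⟨rfl, treeLE_refl _ _⟩)
          · have hxroot' : (⟨x', hle'⟩ : (subtreeAt X c.1).V) ≠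
                (subtreeAt X c.1).root := fun h => hx' (congrArg Subtype.val h)
            rw [BsetAt, if_neg hxroot'] at hb
            obtain ⟨m', hmB', rfl, hmin'⟩ := bmR c hb
            exact iff_of_true (by rw [hx]; exact hle')
              (R_treeLE_inr_inr.mpr ⟨rfl, treeLE_root hS _ _⟩)
        · have hxroot : (⟨x, theChild_le hk⟩ : (subtreeAt X c.1).V) ≠
              (subtreeAt X c.1).root := fun h => hx (congrArg Subtype.val h)
          rw [BsetAt, if_neg hxroot] at ha
          obtain ⟨m, hmB, rfl, hmin⟩ := bmR c ha
          by_cases hx' : x' = c.1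
          · have hxroot' : (⟨x', hle'⟩ : (subtreeAt X c.1).V) =
                (subtreeAt X c.1).root := Subtype.ext hx'
            rw [BsetAt, if_pos hxroot'] at hb
            have hbE : b = Sum.inr (c, S.root) := bm_imageE' hS c hb
            subst hbE
            refine iff_of_false ?_ ?_
            · intro h
              rw [hx'] at h
              rcases (treeLE_child_iff hX c.2.1).mp h with h' | h'
              · rw [h'] at hk
                exact hk root_kept
              · exact hx h'
            · intro h
              have hms := (R_treeLE_inr_inr.mp h).2
              have : m = S.root := (treeLE_self_iff hS).mp hms
              rw [this] at hmin
              exact not_Sroot_min_rho hX hS c hxroot hmin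
          · have hxroot' : (⟨x', hle'⟩ : (subtreeAt X c.1).V) ≠
                (subtreeAt X c.1).root := fun h => hx' (congrArg Subtype.val h)
            rw [BsetAt, if_neg hxroot'] at hb
            obtain ⟨m', hmB', rfl, hmin'⟩ := bmR c hb
            have hord := (rhoMod_spec c).ord ⟨x, theChild_le hk⟩ ⟨x', hle'⟩ m m' hmin hmin'
            constructor
            · intro h
              exact R_treeLE_inr_inr.mpr ⟨rfl, hord.mp ((sub_treeLE hX c).mpr h)⟩
            · intro h
              exact (sub_treeLE hX c).mp (hord.mpr (R_treeLE_inr_inr.mp h).2)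
      · have hcc : theChild hk ≠ theChild hk' := by
          intro h
          apply hle'
          rw [h]
          exact theChild_le hk'
        rw [mu2_unkept hS hX hk (theChild hk) (theChild_le hk)] at ha
        rw [mu2_unkept hS hX hk' (theChild hk') (theChild_le hk')] at hb
        obtain ⟨u, huB, rfl⟩ := ha.1
        obtain ⟨u', huB', rfl⟩ := hb.1
        refine iff_of_false ?_ ?_
        · intro h
          exact hle' (treeLE_trans hX (theChild_le hk) h)
        · intro h
          exact hcc (R_treeLE_inr_inr.mp h).1
end Dir2Main
/-- If `S` is mutually rooted-minor-equivalent to the subtree at a child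
`v` of the root of the tree `X`, then replacing every subtree at a child of the root that
is mutually rooted-minor-equivalent to `S` by a copy of `S` yields a rooted tree mutually
rooted-minor-equivalent to `X`. -/
theorem stmt16 (X : RootedGraph) (hX : X.G.IsTree) (S : RootedGraph) (hS : S.G.IsTree)
    (v : X.V) (hv : X.G.Adj X.root v)
    (hequiv : RootedMutualMinor S (subtreeAt X v)) :
    RootedMutualMinor (replaceEquivSubtrees X S) X := by
  exact ⟨dir1 hX hS, dir2 hX hS⟩
end

section
/- A small locally finite tree has only finitely many vertices of degree greater than 2. -/
open SimpleGraph

/-!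
Fix a root `r` and say that `v` lies on a geodesic from `r` to `w` when
`d(r, v) + d(v, w) = d(r, w)`. If infinitely many vertices have degree greater than `2`, then,
since every vertex has finitely many neighbours, Kőnig's argument yields a geodesic ray `f` from
`r` each vertex of which lies on geodesics from `r` to infinitely many of them. By smallness the
ray eventually has degree `2`; pick such a high-degree `w` for a vertex of that tail. A geodesic
from a tail vertex to `w` must leave it through its neighbour farther from `r`, which is the next
vertex of the ray, so every later `f n` still lies on a geodesic to `w`, and
`n = d(r, f n) ≤ d(r, w)` for all large `n`, which is absurd.
-/

namespace SimpleGraph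

variable {V : Type*} {G : SimpleGraph V} {r v w : V}

def OnGeodesic (G : SimpleGraph V) (r v w : V) : Prop :=
  G.dist r v + G.dist v w = G.dist r w

lemma onGeodesic_self_left (G : SimpleGraph V) (r w : V) : G.OnGeodesic r r w := by
  simp [OnGeodesic]

lemma OnGeodesic.dist_le (h : G.OnGeodesic r v w) : G.dist r v ≤ G.dist r w :=
  h ▸ Nat.le_add_right _ _

lemma OnGeodesic.exists_adj (hG : G.Connected) (h : G.OnGeodesic r v w) (hvw : v ≠ w) :
    ∃ u, G.Adj v u ∧ G.dist r u = G.dist r v + 1 ∧ G.OnGeodesic r u w := by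
  obtain ⟨p, hp⟩ := hG.exists_walk_length_eq_dist v w
  cases p with
  | nil => exact absurd rfl hvw
  | @cons _ u _ hvu q =>
    refine ⟨u, hvu, ?_⟩
    have hq : G.dist u w ≤ q.length := SimpleGraph.dist_le q
    have hru : G.dist r u ≤ G.dist r v + G.dist v u := hG.dist_triangle
    have hrw : G.dist r w ≤ G.dist r u + G.dist u w := hG.dist_triangle
    rw [dist_eq_one_iff_adj.mpr hvu] at hru
    rw [Walk.length_cons] at hp
    unfold OnGeodesic at h ⊢
    omega

lemma exists_adj_infinite_onGeodesic (hG : G.Connected)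
    (hlf : ∀ v, (G.neighborSet v).Finite) {S : Set V}
    (hv : {w ∈ S | G.OnGeodesic r v w}.Infinite) :
    ∃ u, G.Adj v u ∧ G.dist r u = G.dist r v + 1 ∧
      {w ∈ S | G.OnGeodesic r u w}.Infinite := by
  by_contra! hfin
  have hcover : {w ∈ S | G.OnGeodesic r v w} ⊆ insert v (⋃ u ∈ {u | G.Adj v u ∧
      G.dist r u = G.dist r v + 1}, {w ∈ S | G.OnGeodesic r u w}) := by
    rintro w ⟨hwS, hw⟩
    rcases eq_or_ne v w with rfl | hvw
    · exact Set.mem_insert _ _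
    obtain ⟨u, hvu, hru, hu⟩ := hw.exists_adj hG hvw
    exact Or.inr (Set.mem_biUnion ⟨hvu, hru⟩ ⟨hwS, hu⟩)
  refine hv (Set.Finite.subset (Set.Finite.insert v ?_) hcover)
  exact ((hlf v).subset fun u hu => hu.1).biUnion fun u hu => hfin u hu.1 hu.2

lemma exists_geodesic_ray (hG : G.Connected) (hlf : ∀ v, (G.neighborSet v).Finite)
    {S : Set V} (hS : S.Infinite) (r : V) :
    ∃ f : ℕ → V, (∀ n, G.Adj (f n) (f (n + 1))) ∧ (∀ n, G.dist r (f n) = n) ∧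
      ∀ n, {w ∈ S | G.OnGeodesic r (f n) w}.Infinite := by
  choose next hadj hdist hinf using fun x : {v // {w ∈ S | G.OnGeodesic r v w}.Infinite} =>
    exists_adj_infinite_onGeodesic hG hlf x.2
  let g : ℕ → {v // {w ∈ S | G.OnGeodesic r v w}.Infinite} := fun n =>
    Nat.rec ⟨r, by simpa [onGeodesic_self_left] using hS⟩ (fun _ x => ⟨next x, hinf x⟩) n
  refine ⟨fun n => (g n).1, fun n => hadj (g n), fun n => ?_, fun n => (g n).2⟩
  induction n with
  | zero => simp [g]
  | succ n ih => exact (hdist (g n)).trans (congrArg (· + 1) ih)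

lemma injective_of_dist_eq {f : ℕ → V} (hdist : ∀ n, G.dist r (f n) = n) :
    Function.Injective f :=
  fun m n e => by simpa [hdist] using congrArg (G.dist r) e

lemma eq_of_eDeg_eq_two {a b u : V} (hv : eDeg G v = 2) (ha : G.Adj v a) (hb : G.Adj v b)
    (hu : G.Adj v u) (hab : a ≠ b) (hua : u ≠ a) : u = b := by
  have hN : ({a, b} : Set V) = G.neighborSet v :=
    (Set.finite_of_encard_eq_coe hv).eq_of_subset_of_encard_le'
      (Set.insert_subset ha (Set.singleton_subset_iff.mpr hb))
      (by rw [Set.encard_pair hab]; exact hv.le)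
  have hu' : u ∈ ({a, b} : Set V) := hN ▸ hu
  simpa [hua] using hu'

lemma onGeodesic_of_eDeg_eq_two (hG : G.Connected) {f : ℕ → V}
    (hadj : ∀ n, G.Adj (f n) (f (n + 1))) (hdist : ∀ n, G.dist r (f n) = n) {M : ℕ}
    (hM : ∀ n ≥ M, eDeg G (f n) = 2) (hw : 2 < eDeg G w) (hMw : G.OnGeodesic r (f (M + 1)) w)
    (k : ℕ) : G.OnGeodesic r (f (M + 1 + k)) w := by
  induction k with
  | zero => exact hMw
  | succ k ih =>
    have hdeg : eDeg G (f (M + 1 + k)) = 2 := hM _ (by omega)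
    have hne : f (M + 1 + k) ≠ w := by rintro rfl; simp [hdeg] at hw
    obtain ⟨u, hu, hru, huw⟩ := ih.exists_adj hG hne
    have hprev : G.Adj (f (M + k)) (f (M + 1 + k)) := Nat.add_right_comm M k 1 ▸ hadj (M + k)
    have hnext : u = f (M + 1 + k + 1) :=
      eq_of_eDeg_eq_two hdeg hprev.symm (hadj _) hu ((injective_of_dist_eq hdist).ne (by omega))
        (fun e => by simp [e, hdist] at hru; omega)
    rwa [hnext] at huw

end SimpleGraph

/-- A small locally finite tree has only finitely many vertices of degree
greater than `2`. -/
theorem stmt19 {V : Type*} (T : SimpleGraph V) (hT : T.IsTree)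
    (hlf : ∀ v, (T.neighborSet v).Finite) (hsmall : IsSmall T) :
    {v : V | 2 < eDeg T v}.Finite := by
  by_contra hS
  obtain ⟨r⟩ := hT.connected.nonempty
  obtain ⟨f, hadj, hdist, htargets⟩ := exists_geodesic_ray hT.connected hlf hS r
  obtain ⟨M, hM⟩ := hsmall f ⟨injective_of_dist_eq hdist, hadj⟩
  obtain ⟨w, hw, hMw⟩ := (htargets (M + 1)).nonempty
  have hfar := (onGeodesic_of_eDeg_eq_two hT.connected hadj hdist hM hw hMw (T.dist r w)).dist_le
  rw [hdist] at hfar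
  omega
end
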